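/- arXiv:2604.21693 — 4 statements merged into one kernel-verified Lean document; each statement's English description precedes it below -/
import Mathlib

section
/- Let (Ω, F, P) be a probability space, G ⊆ F a sub-σ-algebra, (M, d) a compact metric space, and X : Ω → M an F-measurable random variable. Let b : Ω → P(M) be a regular conditional distribution of X given G, i.e., b is G-measurable (as a map into Borel probability measures on M with the weak topology) and for every Borel set A ⊆ M, b(ω)(A) = P(X ∈ A | G)(ω) for P-a.e. ω. Then, P-almost surely, E[ ∫_M d(m, X) db(·)(m) | G ](ω) = ∫_{M×M} d(m, m') d(b(ω) ⊗ b(ω))(m, m'). -/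
open MeasureTheory

open MeasureTheory ProbabilityTheory Filter Topology Set
open scoped ENNReal NNReal

namespace RaoAux
variable {M : Type*} [MetricSpace M] [CompactSpace M] [MeasurableSpace M] [BorelSpace M]

lemma rao_measurable_eval {A : Set M} (hA : MeasurableSet A) :
    @Measurable (ProbabilityMeasure M) ℝ≥0∞ (borel _) _ (fun μ => (μ : Measure M) A) := by
  letI : MeasurableSpace (ProbabilityMeasure M) := borel _
  haveI : BorelSpace (ProbabilityMeasure M) := ⟨rfl⟩
  have h_eq : (inferInstance : MeasurableSpace M)
      = MeasurableSpace.generateFrom {s : Set M | IsOpen s} := ‹BorelSpace M›.measurable_eq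
  have main : ∀ ⦃A : Set M⦄, MeasurableSet A →
      Measurable (fun μ : ProbabilityMeasure M => (μ : Measure M) A) := by
    refine MeasurableSpace.induction_on_inter h_eq isPiSystem_isOpen ?_ ?_ ?_ ?_
    · simp only [measure_empty]; exact measurable_const
    · intro U hU
      have hlsc : LowerSemicontinuous (fun μ : ProbabilityMeasure M => (μ : Measure M) U) := by
        rw [lowerSemicontinuous_iff_le_liminf]
        intro μ
        exact ProbabilityMeasure.le_liminf_measure_open_of_tendsto tendsto_id hU
      exact hlsc.measurable
    · intro t ht hmeas
      have : (fun μ : ProbabilityMeasure M => (μ : Measure M) tᶜ)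
          = fun μ : ProbabilityMeasure M => 1 - (μ : Measure M) t := by
        funext μ
        rw [measure_compl ht (measure_ne_top _ t), measure_univ]
      rw [this]
      exact measurable_const.sub hmeas
    · intro f hdisj hfm hmeas
      have : (fun μ : ProbabilityMeasure M => (μ : Measure M) (⋃ i, f i))
          = fun μ : ProbabilityMeasure M => ∑' i, (μ : Measure M) (f i) := by
        funext μ; exact measure_iUnion hdisj hfm
      rw [this]
      exact Measurable.ennreal_tsum hmeas
  exact main hA

lemma measurable_toMeasure :
    @Measurable (ProbabilityMeasure M) (Measure M) (borel _) _ (fun μ => (μ : Measure M)) := by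
  letI : MeasurableSpace (ProbabilityMeasure M) := borel _
  exact Measure.measurable_of_measurable_coe _ fun A hA => rao_measurable_eval hA

noncomputable def distBCF (x : M) : BoundedContinuousFunction M ℝ :=
  BoundedContinuousFunction.mkOfCompact ⟨fun m' => dist m' x, continuous_id.dist continuous_const⟩

noncomputable def psi (p : ProbabilityMeasure M × M) : ℝ :=
  ∫ m', dist m' p.2 ∂(p.1 : Measure M)

lemma integrable_distBCF (x : M) (μ : Measure M) [IsFiniteMeasure μ] :
    Integrable (fun m' => dist m' x) μ := (distBCF x).integrable μ

lemma continuous_psi : Continuous (psi (M := M)) := by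
  rw [continuous_iff_continuousAt]
  rintro ⟨μ₀, x₀⟩
  have h1 : Tendsto (fun p : ProbabilityMeasure M × M => ∫ m', dist m' x₀ ∂(p.1 : Measure M))
      (𝓝 (μ₀, x₀)) (𝓝 (∫ m', dist m' x₀ ∂(μ₀ : Measure M))) := by
    have hc := (ProbabilityMeasure.continuous_integral_boundedContinuousFunction
      (X := M) (distBCF x₀)).comp (continuous_fst (X := ProbabilityMeasure M) (Y := M))
    exact hc.tendsto (μ₀, x₀)
  have h2 : Tendsto (fun p : ProbabilityMeasure M × M =>
      psi p - ∫ m', dist m' x₀ ∂(p.1 : Measure M)) (𝓝 (μ₀, x₀)) (𝓝 0) := by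
    refine squeeze_zero_norm (a := fun p : ProbabilityMeasure M × M => dist p.2 x₀) ?_ ?_
    · intro p
      rw [psi, ← integral_sub (integrable_distBCF p.2 _) (integrable_distBCF x₀ _)]
      calc ‖∫ m', (dist m' p.2 - dist m' x₀) ∂(p.1 : Measure M)‖
          ≤ dist p.2 x₀ * ((p.1 : Measure M) Set.univ).toReal := by
            apply norm_integral_le_of_norm_le_const
            apply ae_of_all
            intro m'
            rw [Real.norm_eq_abs, dist_comm m' p.2, dist_comm m' x₀]
            exact abs_dist_sub_le _ _ _
        _ = dist p.2 x₀ := by simp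
    · have : Tendsto (fun p : ProbabilityMeasure M × M => dist p.2 x₀) (𝓝 (μ₀, x₀))
          (𝓝 (dist x₀ x₀)) := (continuous_snd.dist continuous_const).tendsto _
      simpa using this
  have h3 := h2.add h1
  simp only [sub_add_cancel, zero_add] at h3
  exact h3

noncomputable def idKer : @Kernel (ProbabilityMeasure M) M (borel _) _ :=
  @Kernel.mk (ProbabilityMeasure M) M (borel _) _ (fun μ => (μ : Measure M)) measurable_toMeasure

lemma isMarkovKernel_idKer : @IsMarkovKernel (ProbabilityMeasure M) M (borel _) _ idKer :=
  ⟨fun μ => μ.prop⟩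

noncomputable def Psi (μ : ProbabilityMeasure M) : ℝ := ∫ x, psi (μ, x) ∂(μ : Measure M)

lemma stronglyMeasurable_Psi :
    @StronglyMeasurable (ProbabilityMeasure M) ℝ _ (borel _) (Psi (M := M)) := by
  letI : MeasurableSpace (ProbabilityMeasure M) := borel _
  haveI : BorelSpace (ProbabilityMeasure M) := ⟨rfl⟩
  haveI : IsMarkovKernel (idKer (M := M)) := isMarkovKernel_idKer
  have hpsi : StronglyMeasurable (psi (M := M)) := continuous_psi.stronglyMeasurable
  exact hpsi.integral_kernel_prod_right' (κ := idKer)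

end RaoAux

open RaoAux in
/-- Let `b` be a regular conditional distribution of an `M`-valued random variable `X`
given a sub-σ-algebra `G` (so `b` is `G`-measurable into the space of Borel probability
measures on `M` with the weak topology, and `b ω A = P(X ∈ A ∣ G)(ω)` a.e. for every
Borel `A`). Then, `P`-a.s., the conditional expectation given `G` of
`ω ↦ ∫ d(m, X(ω)) d(b ω)(m)` equals the Rao quadratic entropy
`∫ d(m, m') d(b ω ⊗ b ω)(m, m')`. -/
theorem condexp_wassersteinToDirac_eq_raoEntropy
    {Ω : Type*} (G : MeasurableSpace Ω) [F : MeasurableSpace Ω] (P : Measure Ω) [IsProbabilityMeasure P]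
    (hG : G ≤ F)
    {M : Type*} [MetricSpace M] [CompactSpace M] [MeasurableSpace M] [BorelSpace M]
    (X : Ω → M) (hX : Measurable X)
    (b : Ω → ProbabilityMeasure M)
    (hb_meas : @Measurable Ω (ProbabilityMeasure M) G (borel (ProbabilityMeasure M)) b)
    (hb : ∀ A : Set M, MeasurableSet A →
      (fun ω => ((b ω : Measure M) A).toReal)
        =ᵐ[P] P[fun ω => (X ⁻¹' A).indicator (fun _ => (1 : ℝ)) ω | G]) :
    P[fun ω => ∫ m', dist m' (X ω) ∂(b ω : Measure M) | G]
      =ᵐ[P] fun ω =>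
        ∫ p : M × M, dist p.1 p.2 ∂((b ω : Measure M).prod (b ω : Measure M)) := by
  letI : MeasurableSpace (ProbabilityMeasure M) := borel _
  haveI : BorelSpace (ProbabilityMeasure M) := ⟨rfl⟩
  haveI : IsMarkovKernel (idKer (M := M)) := isMarkovKernel_idKer
  letI : MeasurableSpace Ω := F
  have hXF : Measurable[F] X := hX
  have hbF : Measurable[F] b := fun t ht => hG _ (hb_meas ht)
  obtain ⟨C, hC⟩ : ∃ C : ℝ, ∀ x y : M, dist x y ≤ C := by
    obtain ⟨C, hC⟩ :=
      Metric.isBounded_iff.mp (Metric.isBounded_of_compactSpace (s := (univ : Set M)))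
    exact ⟨C, fun x y => hC (mem_univ x) (mem_univ y)⟩
  have hpsi_bound : ∀ p : ProbabilityMeasure M × M, ‖psi p‖ ≤ C := by
    intro p
    rw [psi]
    calc ‖∫ m', dist m' p.2 ∂(p.1 : Measure M)‖
        ≤ C * ((p.1 : Measure M) univ).toReal :=
          norm_integral_le_of_norm_le_const (ae_of_all _ fun m' => by
            rw [Real.norm_eq_abs, abs_of_nonneg dist_nonneg]; exact hC _ _)
      _ = C := by simp
  have hPsi_bound : ∀ μ : ProbabilityMeasure M, ‖Psi μ‖ ≤ C := by
    intro μ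
    rw [Psi]
    calc ‖∫ x, psi (μ, x) ∂(μ : Measure M)‖
        ≤ C * ((μ : Measure M) univ).toReal :=
          norm_integral_le_of_norm_le_const (ae_of_all _ fun x => hpsi_bound _)
      _ = C := by simp
  have hpair : Measurable[F] fun ω => (b ω, X ω) := hbF.prodMk hXF
  have hpsim : Measurable (psi (M := M)) := continuous_psi.measurable
  have hf_meas : Measurable[F] fun ω => psi (b ω, X ω) := hpsim.comp hpair
  have hf_int : Integrable (fun ω => psi (b ω, X ω)) P :=
    Integrable.mono' (integrable_const C) hf_meas.aestronglyMeasurable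
      (ae_of_all _ fun ω => hpsi_bound _)
  have hg_meas : Measurable[F] fun ω => Psi (b ω) := stronglyMeasurable_Psi.measurable.comp hbF
  -- key identity
  have key : ∀ s : Set Ω, MeasurableSet[G] s → ∀ A : Set M, MeasurableSet A →
      ∫⁻ ω in s, (b ω : Measure M) A ∂P = P (s ∩ X ⁻¹' A) := by
    intro s hs A hA
    have hevalm : Measurable[F] fun ω => (b ω : Measure M) A := (rao_measurable_eval hA).comp hbF
    have hind : Integrable ((X ⁻¹' A).indicator fun _ => (1 : ℝ)) P :=
      (integrable_const (1 : ℝ)).indicator (hXF hA)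
    have h1 : ∫ ω in s, ((b ω : Measure M) A).toReal ∂P
        = (∫⁻ ω in s, (b ω : Measure M) A ∂P).toReal :=
      integral_toReal hevalm.aemeasurable.restrict
        (ae_of_all _ fun ω => lt_of_le_of_lt prob_le_one ENNReal.one_lt_top)
    have h2 : ∫ ω in s, ((b ω : Measure M) A).toReal ∂P
        = ∫ ω in s, (X ⁻¹' A).indicator (fun _ => (1 : ℝ)) ω ∂P := by
      rw [integral_congr_ae (ae_restrict_of_ae (hb A hA))]
      exact setIntegral_condExp hG hind hs
    have h3 : ∫ ω in s, (X ⁻¹' A).indicator (fun _ => (1 : ℝ)) ω ∂P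
        = (P (s ∩ X ⁻¹' A)).toReal := by
      rw [setIntegral_indicator (hXF hA), setIntegral_const, smul_eq_mul, mul_one, Measure.real_def]
    have hfin1 : ∫⁻ ω in s, (b ω : Measure M) A ∂P ≠ ∞ := by
      have hle : ∫⁻ ω in s, (b ω : Measure M) A ∂P ≤ 1 := by
        refine le_trans (lintegral_mono fun ω => prob_le_one) ?_
        rw [lintegral_one, Measure.restrict_apply_univ]
        exact prob_le_one
      exact (hle.trans_lt ENNReal.one_lt_top).ne
    exact (ENNReal.toReal_eq_toReal_iff' hfin1 (measure_ne_top _ _)).mp (by rw [← h1, h2, h3])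
  -- set-integral equality
  have hg_eq : ∀ s : Set Ω, MeasurableSet[G] s →
      ∫ ω in s, Psi (b ω) ∂P = ∫ ω in s, psi (b ω, X ω) ∂P := by
    intro s hs
    have hsF : MeasurableSet[F] s := hG s hs
    haveI hνfin : IsFiniteMeasure ((P.restrict s).map b) :=
      ⟨by rw [Measure.map_apply hbF MeasurableSet.univ]; exact measure_lt_top _ _⟩
    haveI hQfin : IsFiniteMeasure ((P.restrict s).map (fun ω => (b ω, X ω))) :=
      ⟨by rw [Measure.map_apply hpair MeasurableSet.univ]; exact measure_lt_top _ _⟩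
    have hQ : (P.restrict s).map (fun ω => (b ω, X ω))
        = ((P.restrict s).map b).compProd idKer := by
      refine ext_of_generate_finite _ generateFrom_prod.symm isPiSystem_prod ?_ ?_
      · rintro _ ⟨T, hT, A, hA, rfl⟩
        replace hT : MeasurableSet T := hT
        replace hA : MeasurableSet A := hA
        have hTb : MeasurableSet[F] (b ⁻¹' T) := hbF hT
        have hTbG : MeasurableSet[G] (b ⁻¹' T) := hb_meas hT
        rw [Measure.map_apply hpair (hT.prod hA),
          show (fun ω => (b ω, X ω)) ⁻¹' (T ×ˢ A) = b ⁻¹' T ∩ X ⁻¹' A from rfl,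
          Measure.restrict_apply (hTb.inter (hXF hA)),
          Measure.compProd_apply_prod hT hA]
        have hker : ∫⁻ μ in T, (idKer μ) A ∂((P.restrict s).map b)
            = ∫⁻ μ in T, (μ : Measure M) A ∂((P.restrict s).map b) := rfl
        rw [hker, setLIntegral_map hT (rao_measurable_eval hA) hbF,
          Measure.restrict_restrict hTb, key _ (hTbG.inter hs) A hA, inter_right_comm]
      · rw [Measure.map_apply hpair MeasurableSet.univ, preimage_univ,
          Measure.compProd_apply_univ, Measure.map_apply hbF MeasurableSet.univ,
          preimage_univ]
    have hint_psi_Q : Integrable psi ((P.restrict s).map (fun ω => (b ω, X ω))) :=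
      Integrable.mono' (integrable_const C) hpsim.aestronglyMeasurable
        (ae_of_all _ hpsi_bound)
    have hint_psi_Q' : Integrable psi (((P.restrict s).map b).compProd idKer) :=
      hQ ▸ hint_psi_Q
    calc ∫ ω in s, Psi (b ω) ∂P
        = ∫ μ, Psi μ ∂((P.restrict s).map b) :=
          (integral_map hbF.aemeasurable stronglyMeasurable_Psi.aestronglyMeasurable).symm
      _ = ∫ μ, ∫ x, psi (μ, x) ∂(idKer μ) ∂((P.restrict s).map b) := rfl
      _ = ∫ z, psi z ∂(((P.restrict s).map b).compProd idKer) :=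
          (Measure.integral_compProd hint_psi_Q').symm
      _ = ∫ z, psi z ∂((P.restrict s).map (fun ω => (b ω, X ω))) := by rw [hQ]
      _ = ∫ ω in s, psi (b ω, X ω) ∂P :=
          integral_map hpair.aemeasurable hpsim.aestronglyMeasurable
  have hmain : (fun ω => Psi (b ω)) =ᵐ[P] P[fun ω => psi (b ω, X ω) | G] := by
    refine ae_eq_condExp_of_forall_setIntegral_eq hG hf_int ?_ ?_ ?_
    · intro s hs _
      exact (Integrable.mono' (integrable_const C) hg_meas.aestronglyMeasurable
        (ae_of_all _ fun ω => hPsi_bound _)).integrableOn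
    · intro s hs _
      exact hg_eq s hs
    · exact ⟨fun ω => Psi (b ω), stronglyMeasurable_Psi.comp_measurable hb_meas,
        EventuallyEq.rfl⟩
  have hrw : (fun ω => psi (b ω, X ω))
      = fun ω => ∫ m', dist m' (X ω) ∂(b ω : Measure M) := rfl
  rw [hrw] at hmain
  have hgoal_fun : ∀ ω : Ω,
      (∫ p : M × M, dist p.1 p.2 ∂((b ω : Measure M).prod (b ω : Measure M)))
        = Psi (b ω) := by
    intro ω
    have hint : Integrable (fun p : M × M => dist p.1 p.2)
        ((b ω : Measure M).prod (b ω : Measure M)) :=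
      Integrable.mono' (integrable_const C) continuous_dist.aestronglyMeasurable
        (ae_of_all _ fun p => by
          rw [Real.norm_eq_abs, abs_of_nonneg dist_nonneg]; exact hC _ _)
    rw [MeasureTheory.integral_prod _ hint]
    simp only [Psi, psi]
    refine integral_congr_ae (ae_of_all _ fun x => ?_)
    exact integral_congr_ae (ae_of_all _ fun y => dist_comm x y)
  exact hmain.symm.trans (Eventually.of_forall fun ω => (hgoal_fun ω).symm)
end

section
/- Let (Ω, F, P) be a probability space, (M, d) a compact metric space, X : Ω → M an F-measurable random variable, and β ∈ (0,1). For each t ∈ ℕ, let G_t ⊆ F be a sub-σ-algebra and let b_t : Ω → P(M) be a regular conditional distribution of X given G_t (i.e., b_t is G_t-measurable and b_t(ω)(A) = P(X ∈ A | G_t)(ω) a.s. for every Borel A ⊆ M). Then E[ ∑_{t=0}^∞ β^t ∫_M d(m, X) db_t(·)(m) ] = E[ ∑_{t=0}^∞ β^t W̃₁(b_t(·)) ], where both sides are finite. -/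
open MeasureTheory

/-- The Rao quadratic entropy of a measure `μ` on a metric space: the integral of the
distance function against the product measure `μ ⊗ μ`. -/
noncomputable def raoEntropy {M : Type*} [MeasurableSpace M] [PseudoMetricSpace M]
    (μ : Measure M) : ℝ :=
  ∫ p : M × M, dist p.1 p.2 ∂(μ.prod μ)

section Aux

open Set Metric Filter
open scoped ENNReal NNReal

variable {M : Type*} [MetricSpace M] [CompactSpace M] [MeasurableSpace M] [BorelSpace M]

/-- A continuous real function on a compact space is integrable w.r.t. a finite measure. -/
lemma contIntegrable {X : Type*} [MetricSpace X] [CompactSpace X] [MeasurableSpace X]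
    [BorelSpace X] (μ : Measure X) [IsFiniteMeasure μ] {f : X → ℝ} (hf : Continuous f) :
    Integrable f μ :=
  (BoundedContinuousFunction.mkOfCompact ⟨f, hf⟩).integrable μ

/-- A finite measurable partition of a compact metric space into sets of radius `≤ ε`. -/
lemma exists_partition [Nonempty M] {ε : ℝ} (hε : 0 < ε) :
    ∃ (k : ℕ) (A : ℕ → Set M) (c : ℕ → M),
      (∀ i, MeasurableSet (A i)) ∧ Pairwise (Function.onFun Disjoint A) ∧
      (∀ i, ∀ x ∈ A i, dist x (c i) ≤ ε) ∧ (∀ i, k ≤ i → A i = ∅) ∧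
      (∀ x : M, ∃ i, i < k ∧ x ∈ A i) := by
  obtain ⟨t, -, tfin, hcov⟩ := finite_cover_balls_of_compact (isCompact_univ (X := M)) hε
  classical
  set l : List M := tfin.toFinset.toList with hl
  set m₀ : M := Classical.arbitrary M
  set c : ℕ → M := fun i => l.getD i m₀ with hc
  set B : ℕ → Set M := fun i => if i < l.length then ball (c i) ε else ∅ with hB
  refine ⟨l.length, disjointed B, c, ?_, disjoint_disjointed B, ?_, ?_, ?_⟩
  · intro i
    refine MeasurableSet.disjointed (fun j => ?_) i
    by_cases hj : j < l.length <;> simp [hB, hj, measurableSet_ball]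
  · intro i x hx
    have hx' : x ∈ B i := disjointed_subset B i hx
    by_cases hi : i < l.length
    · simp only [hB, if_pos hi] at hx'
      exact le_of_lt hx'
    · simp [hB, if_neg hi] at hx'
  · intro i hi
    have : B i = ∅ := by simp [hB, Nat.not_lt.mpr hi]
    exact Set.eq_empty_of_subset_empty (this ▸ disjointed_subset B i)
  · intro x
    have hx : x ∈ ⋃ y ∈ t, ball y ε := hcov (Set.mem_univ x)
    obtain ⟨y, hyt, hxy⟩ := Set.mem_iUnion₂.mp hx
    have hyl : y ∈ l := by
      rw [hl]
      exact Finset.mem_toList.mpr (tfin.mem_toFinset.mpr hyt)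
    obtain ⟨j, hj, hjy⟩ := List.mem_iff_getElem.mp hyl
    have hBj : x ∈ B j := by
      have : c j = y := by rw [hc]; simp only; rw [List.getD_eq_getElem l m₀ hj, hjy]
      simp [hB, hj, this, hxy]
    have : x ∈ ⋃ i, disjointed B i := by
      rw [iUnion_disjointed]
      exact Set.mem_iUnion.mpr ⟨j, hBj⟩
    obtain ⟨i, hi⟩ := Set.mem_iUnion.mp this
    refine ⟨i, ?_, hi⟩
    by_contra h
    have : B i = ∅ := by simp [hB, Nat.not_lt.mpr (Nat.le_of_not_lt h)]
    exact absurd (this ▸ disjointed_subset B i hi) (Set.notMem_empty x)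


/-- The integral of `dist · x` against a probability measure is `1`-Lipschitz in `x`. -/
lemma abs_integral_dist_sub_le {M : Type*} [MetricSpace M] [CompactSpace M] [MeasurableSpace M]
    [BorelSpace M] (ρ : Measure M) [IsProbabilityMeasure ρ] (x y : M) :
    |(∫ m', dist m' x ∂ρ) - ∫ m', dist m' y ∂ρ| ≤ dist x y := by
  have hint : ∀ z : M, Integrable (fun m' => dist m' z) ρ :=
    fun z => contIntegrable ρ (continuous_id.dist continuous_const)
  rw [← integral_sub (hint x) (hint y)]
  calc |∫ m', (dist m' x - dist m' y) ∂ρ|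
      ≤ ∫ m', |dist m' x - dist m' y| ∂ρ := by
        simpa [Real.norm_eq_abs] using
          norm_integral_le_integral_norm (μ := ρ) (fun m' => dist m' x - dist m' y)
    _ ≤ ∫ _m' : M, dist x y ∂ρ := by
        refine integral_mono ((hint x).sub (hint y)).abs (integrable_const _) ?_
        intro m'
        simpa [dist_comm] using abs_dist_sub_le x y m'
    _ = dist x y := by simp

variable {Ω : Type*} [F : MeasurableSpace Ω] (P : Measure Ω) [IsProbabilityMeasure P]

/-- Key property: integrating a bounded `G`-measurable function against the indicator of
`X ∈ A` is the same as against `ν · A`. -/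
lemma key_integral {G : MeasurableSpace Ω} (hG : G ≤ F) {X : Ω → M} (hX : Measurable[F] X)
    {ν : Ω → ProbabilityMeasure M}
    (hν : ∀ A : Set M, MeasurableSet A →
      (fun ω => ((ν ω : Measure M) A).toReal)
        =ᵐ[P] P[fun ω => (X ⁻¹' A).indicator (fun _ => (1 : ℝ)) ω | G])
    {f : Ω → ℝ} (hf : StronglyMeasurable[G] f) {C : ℝ} (hfC : ∀ ω, |f ω| ≤ C)
    {A : Set M} (hA : MeasurableSet A) :
    ∫ ω, f ω * (X ⁻¹' A).indicator (fun _ => (1 : ℝ)) ω ∂P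
      = ∫ ω, f ω * ((ν ω : Measure M) A).toReal ∂P := by
  letI : MeasurableSpace Ω := F
  set g : Ω → ℝ := fun ω => (X ⁻¹' A).indicator (fun _ => (1 : ℝ)) ω with hg
  have hg_int : Integrable g P := (integrable_const (1 : ℝ)).indicator (hX hA)
  have hfm : AEStronglyMeasurable f P := ((hf.mono hG)).aestronglyMeasurable
  have hfg_int : Integrable (f * g) P := by
    refine Integrable.mono' (integrable_const C) (hfm.mul hg_int.1) ?_
    filter_upwards with ω
    have hgle : |g ω| ≤ 1 := by
      rw [hg]; by_cases h : ω ∈ X ⁻¹' A <;> simp [Set.indicator_apply, h]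
    calc ‖f ω * g ω‖ = |f ω| * |g ω| := abs_mul _ _
      _ ≤ |f ω| * 1 := by
          exact mul_le_mul_of_nonneg_left hgle (abs_nonneg _)
      _ ≤ C := by rw [mul_one]; exact hfC ω
  have h1 : ∫ ω, f ω * g ω ∂P = ∫ ω, (P[f * g|G]) ω ∂P := (integral_condExp hG).symm
  have h2 : P[f * g|G] =ᵐ[P] f * P[g|G] := condExp_mul_of_stronglyMeasurable_left hf hfg_int hg_int
  have h3 := (hν A hA)
  calc ∫ ω, f ω * g ω ∂P = ∫ ω, (P[f * g|G]) ω ∂P := h1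
    _ = ∫ ω, (f * P[g|G]) ω ∂P := integral_congr_ae h2
    _ = ∫ ω, f ω * ((ν ω : Measure M) A).toReal ∂P := by
        refine integral_congr_ae ?_
        filter_upwards [h3] with ω hω
        simp only [Pi.mul_apply]
        rw [← hω]

/-- Pointwise approximation bound over a partition. -/
lemma approx_pointwise {k : ℕ} {A : ℕ → Set M} {c : ℕ → M} {ε : ℝ}
    (hdisj : Pairwise (Function.onFun Disjoint A))
    (hdist : ∀ i, ∀ x ∈ A i, dist x (c i) ≤ ε)
    (hcov : ∀ x : M, ∃ i, i < k ∧ x ∈ A i)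
    (ρ : Measure M) [IsProbabilityMeasure ρ] (x : M) :
    |(∫ m', dist m' x ∂ρ)
      - ∑ i ∈ Finset.range k,
          (A i).indicator (fun _ => (1 : ℝ)) x * ∫ m', dist m' (c i) ∂ρ| ≤ ε := by
  obtain ⟨i, hik, hxi⟩ := hcov x
  have hint : ∀ y : M, Integrable (fun m' => dist m' y) ρ :=
    fun y => contIntegrable ρ (continuous_id.dist continuous_const)
  have hsum : ∑ j ∈ Finset.range k,
      (A j).indicator (fun _ => (1 : ℝ)) x * ∫ m', dist m' (c j) ∂ρ
      = ∫ m', dist m' (c i) ∂ρ := by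
    rw [Finset.sum_eq_single i]
    · simp [Set.indicator_apply, hxi]
    · intro j _ hji
      have hxj : x ∉ A j := fun hxj =>
        (Set.disjoint_left.mp (hdisj hji.symm)) hxi hxj
      simp [Set.indicator_apply, hxj]
    · intro h
      exact absurd (Finset.mem_range.mpr hik) h
  rw [hsum]
  exact le_trans (abs_integral_dist_sub_le ρ x (c i)) (hdist i x hxi)

end Aux

section Core

open Set Metric Filter
open scoped ENNReal NNReal

variable {Ω : Type*} [F : MeasurableSpace Ω] (P : Measure Ω) [IsProbabilityMeasure P]
  {M : Type*} [MetricSpace M] [CompactSpace M] [MeasurableSpace M] [BorelSpace M]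

/-- The core single-time-step statement. -/
lemma core_step [Nonempty M] {G : MeasurableSpace Ω} (hG : G ≤ F)
    {X : Ω → M} (hX : Measurable[F] X) {ν : Ω → ProbabilityMeasure M}
    (hν_meas : @Measurable Ω (ProbabilityMeasure M) G (borel (ProbabilityMeasure M)) ν)
    (hν : ∀ A : Set M, MeasurableSet A →
      (fun ω => ((ν ω : Measure M) A).toReal)
        =ᵐ[P] P[fun ω => (X ⁻¹' A).indicator (fun _ => (1 : ℝ)) ω | G])
    {C : ℝ} (hC : ∀ x y : M, dist x y ≤ C) :
    Measurable[F] (fun ω => ∫ m', dist m' (X ω) ∂(ν ω : Measure M)) ∧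
    AEStronglyMeasurable[F] (fun ω => raoEntropy (ν ω : Measure M)) P ∧
    ∫ ω, (∫ m', dist m' (X ω) ∂(ν ω : Measure M)) ∂P
      = ∫ ω, raoEntropy (ν ω : Measure M) ∂P := by
  letI : MeasurableSpace Ω := F
  letI mP : MeasurableSpace (ProbabilityMeasure M) := borel (ProbabilityMeasure M)
  haveI : BorelSpace (ProbabilityMeasure M) := ⟨rfl⟩
  obtain ⟨x₀⟩ := ‹Nonempty M›
  have hC0 : 0 ≤ C := le_trans dist_nonneg (hC x₀ x₀)
  set φ : M → Ω → ℝ := fun x ω => ∫ m', dist m' x ∂(ν ω : Measure M) with hφ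
  have hφcont : ∀ x : M, Continuous fun ρ : ProbabilityMeasure M =>
      ∫ m', dist m' x ∂(ρ : Measure M) := fun x =>
    ProbabilityMeasure.continuous_integral_boundedContinuousFunction
      (BoundedContinuousFunction.mkOfCompact
        ⟨fun m' => dist m' x, continuous_id.dist continuous_const⟩)
  have hφmeasG : ∀ x : M, Measurable[G] (φ x) := fun x => ((hφcont x).measurable).comp hν_meas
  have hφmeasF : ∀ x : M, Measurable[F] (φ x) := fun x => (hφmeasG x).mono hG le_rfl
  have hφsm : ∀ x : M, StronglyMeasurable[G] (φ x) := fun x => (hφmeasG x).stronglyMeasurable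
  have hφnonneg : ∀ x ω, 0 ≤ φ x ω := fun x ω => integral_nonneg fun _ => dist_nonneg
  have hφle : ∀ x ω, φ x ω ≤ C := by
    intro x ω
    calc φ x ω ≤ ∫ _m' : M, C ∂(ν ω : Measure M) :=
          integral_mono (contIntegrable _ (continuous_id.dist continuous_const))
            (integrable_const C) (fun m' => hC m' x)
      _ = C := by simp
  have hφabs : ∀ x ω, |φ x ω| ≤ C := fun x ω => abs_le.mpr ⟨by linarith [hφnonneg x ω], hφle x ω⟩
  set u : Ω → ℝ := fun ω => ∫ m', dist m' (X ω) ∂(ν ω : Measure M) with hu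
  set v : Ω → ℝ := fun ω => raoEntropy (ν ω : Measure M) with hv
  have hu_abs : ∀ ω, |u ω| ≤ C := fun ω => hφabs (X ω) ω
  have v_eq : ∀ ω, v ω = ∫ m, φ m ω ∂(ν ω : Measure M) := by
    intro ω
    have h := integral_prod (μ := (ν ω : Measure M)) (ν := (ν ω : Measure M))
      (fun p : M × M => dist p.1 p.2) (contIntegrable _ continuous_dist)
    refine h.trans ?_
    refine integral_congr_ae (Filter.Eventually.of_forall fun m => ?_)
    simp only [hφ]
    simp_rw [dist_comm m]
  have hv_nonneg : ∀ ω, 0 ≤ v ω := by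
    intro ω
    rw [v_eq ω]
    exact integral_nonneg fun m => hφnonneg m ω
  have hv_le : ∀ ω, v ω ≤ C := by
    intro ω
    rw [v_eq ω]
    have hφcont' : Continuous fun m => φ m ω := by
      refine (LipschitzWith.of_dist_le_mul (K := 1) fun m m' => ?_).continuous
      simp only [NNReal.coe_one, one_mul, Real.dist_eq]
      exact abs_integral_dist_sub_le (ν ω : Measure M) m m'
    calc ∫ m, φ m ω ∂(ν ω : Measure M) ≤ ∫ _m : M, C ∂(ν ω : Measure M) :=
          integral_mono (contIntegrable _ hφcont') (integrable_const C) (fun m => hφle m ω)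
      _ = C := by simp
  have hv_abs : ∀ ω, |v ω| ≤ C := fun ω => abs_le.mpr ⟨by linarith [hv_nonneg ω], hv_le ω⟩
  -- the approximation step
  have approx : ∀ ε : ℝ, 0 < ε → ∃ gg hh : Ω → ℝ,
      Measurable[F] gg ∧ AEStronglyMeasurable hh P ∧
      (∀ ω, |u ω - gg ω| ≤ ε) ∧ (∀ ω, |v ω - hh ω| ≤ ε) ∧
      (∀ ω, |gg ω| ≤ C + ε) ∧ (∀ ω, |hh ω| ≤ C + ε) ∧
      ∫ ω, gg ω ∂P = ∫ ω, hh ω ∂P := by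
    intro ε hεpos
    obtain ⟨k, A, c, hmeasA, hdisj, hdistA, hempty, hcov⟩ := exists_partition (M := M) hεpos
    set gg : Ω → ℝ := fun ω => ∑ i ∈ Finset.range k,
      (X ⁻¹' (A i)).indicator (fun _ => (1 : ℝ)) ω * φ (c i) ω with hgg
    set hh : Ω → ℝ := fun ω => ∑ i ∈ Finset.range k,
      ((ν ω : Measure M) (A i)).toReal * φ (c i) ω with hhh
    have hind_eq : ∀ (i : ℕ) (ω : Ω), (X ⁻¹' (A i)).indicator (fun _ => (1 : ℝ)) ω
        = (A i).indicator (fun _ => (1 : ℝ)) (X ω) := by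
      intro i ω
      by_cases h : X ω ∈ A i <;> simp [Set.indicator_apply, h]
    have hgg_meas : Measurable[F] gg := by
      refine Finset.measurable_sum _ fun i _ => ?_
      exact (measurable_const.indicator (hX (hmeasA i))).mul (hφmeasF (c i))
    have hmeasν : ∀ i : ℕ, AEStronglyMeasurable (fun ω => ((ν ω : Measure M) (A i)).toReal) P :=
      fun i => ((stronglyMeasurable_condExp.mono hG).aestronglyMeasurable).congr
        (hν (A i) (hmeasA i)).symm
    have hνle1 : ∀ (i : ℕ) (ω : Ω), ((ν ω : Measure M) (A i)).toReal ≤ 1 := by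
      intro i ω
      have h1 : (ν ω : Measure M) (A i) ≤ 1 := prob_le_one
      calc ((ν ω : Measure M) (A i)).toReal ≤ (1 : ℝ≥0∞).toReal :=
            ENNReal.toReal_mono (by norm_num) h1
        _ = 1 := by simp
    have hνnonneg : ∀ (i : ℕ) (ω : Ω), 0 ≤ ((ν ω : Measure M) (A i)).toReal :=
      fun i ω => ENNReal.toReal_nonneg
    have hhh_meas : AEStronglyMeasurable hh P := by
      refine Finset.aestronglyMeasurable_fun_sum _ fun i _ => ?_
      exact (hmeasν i).mul (hφmeasF (c i)).aestronglyMeasurable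
    have hgapprox : ∀ ω, |u ω - gg ω| ≤ ε := by
      intro ω
      have h := approx_pointwise hdisj hdistA hcov (ν ω : Measure M) (X ω)
      simp only [hgg, hu, hφ]
      simp only [hind_eq]
      exact h
    have hhapprox : ∀ ω, |v ω - hh ω| ≤ ε := by
      intro ω
      have hφcont' : Continuous fun m => φ m ω := by
        refine (LipschitzWith.of_dist_le_mul (K := 1) fun m m' => ?_).continuous
        simp only [NNReal.coe_one, one_mul, Real.dist_eq]
        exact abs_integral_dist_sub_le (ν ω : Measure M) m m'
      have hint_φ : Integrable (fun m => φ m ω) (ν ω : Measure M) :=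
        contIntegrable _ hφcont'
      have hrewrite : ∀ i : ℕ, (fun m => (A i).indicator (fun _ => (1 : ℝ)) m * φ (c i) ω)
          = (A i).indicator (fun _ => φ (c i) ω) := by
        intro i
        funext m
        by_cases hm : m ∈ A i <;> simp [Set.indicator_apply, hm]
      have hint_sum : Integrable
          (fun m => ∑ i ∈ Finset.range k, (A i).indicator (fun _ => (1 : ℝ)) m * φ (c i) ω)
          (ν ω : Measure M) := by
        refine integrable_finset_sum _ fun i _ => ?_
        rw [hrewrite i]
        exact (integrable_const _).indicator (hmeasA i)
      have hh_eq : hh ω = ∫ m, ∑ i ∈ Finset.range k,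
          (A i).indicator (fun _ => (1 : ℝ)) m * φ (c i) ω ∂(ν ω : Measure M) := by
        rw [integral_finset_sum]
        · refine Finset.sum_congr rfl fun i _ => ?_
          rw [hrewrite i, integral_indicator_const _ (hmeasA i), smul_eq_mul]; rfl
        · intro i _
          rw [hrewrite i]
          exact (integrable_const _).indicator (hmeasA i)
      rw [v_eq ω, hh_eq, ← integral_sub hint_φ hint_sum]
      calc |∫ m, (φ m ω - ∑ i ∈ Finset.range k,
            (A i).indicator (fun _ => (1 : ℝ)) m * φ (c i) ω) ∂(ν ω : Measure M)|
          ≤ ∫ m, |φ m ω - ∑ i ∈ Finset.range k,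
            (A i).indicator (fun _ => (1 : ℝ)) m * φ (c i) ω| ∂(ν ω : Measure M) := by
            simpa [Real.norm_eq_abs] using norm_integral_le_integral_norm
              (μ := (ν ω : Measure M)) (fun m => φ m ω - ∑ i ∈ Finset.range k,
                (A i).indicator (fun _ => (1 : ℝ)) m * φ (c i) ω)
        _ ≤ ∫ _m : M, ε ∂(ν ω : Measure M) := by
            refine integral_mono (hint_φ.sub hint_sum).abs (integrable_const _) fun m => ?_
            exact approx_pointwise hdisj hdistA hcov (ν ω : Measure M) m
        _ = ε := by simp
    have hgg_abs : ∀ ω, |gg ω| ≤ C + ε := by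
      intro ω
      calc |gg ω| ≤ |u ω| + |u ω - gg ω| := by
            have := abs_sub_abs_le_abs_sub (gg ω) (u ω)
            have h2 := abs_sub_comm (gg ω) (u ω)
            rw [h2] at this
            linarith [abs_nonneg (u ω)]
        _ ≤ C + ε := add_le_add (hu_abs ω) (hgapprox ω)
    have hhh_abs : ∀ ω, |hh ω| ≤ C + ε := by
      intro ω
      calc |hh ω| ≤ |v ω| + |v ω - hh ω| := by
            have := abs_sub_abs_le_abs_sub (hh ω) (v ω)
            have h2 := abs_sub_comm (hh ω) (v ω)
            rw [h2] at this
            linarith [abs_nonneg (v ω)]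
        _ ≤ C + ε := add_le_add (hv_abs ω) (hhapprox ω)
    have hint_gi : ∀ i : ℕ, Integrable
        (fun ω => (X ⁻¹' (A i)).indicator (fun _ => (1 : ℝ)) ω * φ (c i) ω) P := by
      intro i
      refine Integrable.mono' (integrable_const C)
        (((measurable_const.indicator (hX (hmeasA i))).mul (hφmeasF (c i))).aestronglyMeasurable)
        (Filter.Eventually.of_forall fun ω => ?_)
      rw [Real.norm_eq_abs, abs_mul]
      have hile : |(X ⁻¹' (A i)).indicator (fun _ => (1 : ℝ)) ω| ≤ 1 := by
        by_cases h : ω ∈ X ⁻¹' (A i) <;> simp [Set.indicator_apply, h]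
      calc |(X ⁻¹' (A i)).indicator (fun _ => (1 : ℝ)) ω| * |φ (c i) ω|
          ≤ 1 * C := mul_le_mul hile (hφabs (c i) ω) (abs_nonneg _) zero_le_one
        _ = C := one_mul C
    have hint_hi : ∀ i : ℕ, Integrable
        (fun ω => ((ν ω : Measure M) (A i)).toReal * φ (c i) ω) P := by
      intro i
      refine Integrable.mono' (integrable_const C)
        ((hmeasν i).mul (hφmeasF (c i)).aestronglyMeasurable)
        (Filter.Eventually.of_forall fun ω => ?_)
      rw [Real.norm_eq_abs, abs_mul, abs_of_nonneg (hνnonneg i ω)]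
      calc ((ν ω : Measure M) (A i)).toReal * |φ (c i) ω|
          ≤ 1 * C := mul_le_mul (hνle1 i ω) (hφabs (c i) ω) (abs_nonneg _) zero_le_one
        _ = C := one_mul C
    have hint_eq : ∫ ω, gg ω ∂P = ∫ ω, hh ω ∂P := by
      rw [hgg, hhh, integral_finset_sum _ (fun i _ => hint_gi i),
        integral_finset_sum _ (fun i _ => hint_hi i)]
      refine Finset.sum_congr rfl fun i _ => ?_
      have h1 : ∫ ω, (X ⁻¹' (A i)).indicator (fun _ => (1 : ℝ)) ω * φ (c i) ω ∂P
          = ∫ ω, φ (c i) ω * (X ⁻¹' (A i)).indicator (fun _ => (1 : ℝ)) ω ∂P :=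
        integral_congr_ae (Filter.Eventually.of_forall fun ω => mul_comm _ _)
      have h2 : ∫ ω, ((ν ω : Measure M) (A i)).toReal * φ (c i) ω ∂P
          = ∫ ω, φ (c i) ω * ((ν ω : Measure M) (A i)).toReal ∂P :=
        integral_congr_ae (Filter.Eventually.of_forall fun ω => mul_comm _ _)
      rw [h1, h2]
      exact key_integral P hG hX hν (hφsm (c i)) (fun ω => hφabs (c i) ω) (hmeasA i)
    exact ⟨gg, hh, hgg_meas, hhh_meas, hgapprox, hhapprox, hgg_abs, hhh_abs, hint_eq⟩
  -- measurability of u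
  have hseq : ∀ n : ℕ, ∃ g : Ω → ℝ, Measurable[F] g ∧ ∀ ω, |u ω - g ω| ≤ 1 / (n + 1) := by
    intro n
    obtain ⟨g, h, hg1, -, hg2, -, -, -, -⟩ := approx (1 / (n + 1)) (by positivity)
    exact ⟨g, hg1, hg2⟩
  choose gseq hgmeas hgapprox using hseq
  have humeas : Measurable[F] u := by
    refine measurable_of_tendsto_metrizable hgmeas ?_
    rw [tendsto_pi_nhds]
    intro ω
    rw [tendsto_iff_dist_tendsto_zero]
    refine squeeze_zero (fun n => dist_nonneg) (fun n => ?_)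
      tendsto_one_div_add_atTop_nhds_zero_nat
    rw [Real.dist_eq, abs_sub_comm]
    exact hgapprox n ω
  -- a.e.-strong measurability of v
  have hseqv : ∀ n : ℕ, ∃ h : Ω → ℝ, AEStronglyMeasurable h P ∧ ∀ ω, |v ω - h ω| ≤ 1 / (n + 1) := by
    intro n
    obtain ⟨g, h, -, hh1, -, hh2, -, -, -⟩ := approx (1 / (n + 1)) (by positivity)
    exact ⟨h, hh1, hh2⟩
  choose hseq' hhmeas hhapprox using hseqv
  have hvmeas : AEStronglyMeasurable v P := by
    refine aestronglyMeasurable_of_tendsto_ae Filter.atTop hhmeas ?_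
    refine Filter.Eventually.of_forall fun ω => ?_
    rw [tendsto_iff_dist_tendsto_zero]
    refine squeeze_zero (fun n => dist_nonneg) (fun n => ?_)
      tendsto_one_div_add_atTop_nhds_zero_nat
    rw [Real.dist_eq, abs_sub_comm]
    exact hhapprox n ω
  refine ⟨humeas, hvmeas, ?_⟩
  -- the integral identity
  have hu_int : Integrable u P :=
    Integrable.mono' (integrable_const C) humeas.aestronglyMeasurable
      (Filter.Eventually.of_forall fun ω => by rw [Real.norm_eq_abs]; exact hu_abs ω)
  have hv_int : Integrable v P :=
    Integrable.mono' (integrable_const C) hvmeas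
      (Filter.Eventually.of_forall fun ω => by rw [Real.norm_eq_abs]; exact hv_abs ω)
  have hkey : ∀ ε : ℝ, 0 < ε → |∫ ω, u ω ∂P - ∫ ω, v ω ∂P| ≤ 2 * ε := by
    intro ε hεpos
    obtain ⟨gg, hh, hgm, hhm, hga, hha, hgb, hhb, hghint⟩ := approx ε hεpos
    have hgg_int : Integrable gg P :=
      Integrable.mono' (integrable_const (C + ε)) hgm.aestronglyMeasurable
        (Filter.Eventually.of_forall fun ω => by rw [Real.norm_eq_abs]; exact hgb ω)
    have hhh_int : Integrable hh P :=
      Integrable.mono' (integrable_const (C + ε)) hhm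
        (Filter.Eventually.of_forall fun ω => by rw [Real.norm_eq_abs]; exact hhb ω)
    have habs1 : |∫ ω, u ω ∂P - ∫ ω, gg ω ∂P| ≤ ε := by
      rw [← integral_sub hu_int hgg_int]
      calc |∫ ω, (u ω - gg ω) ∂P| ≤ ∫ ω, |u ω - gg ω| ∂P := by
            simpa [Real.norm_eq_abs] using
              norm_integral_le_integral_norm (μ := P) (fun ω => u ω - gg ω)
        _ ≤ ∫ _ω : Ω, ε ∂P := integral_mono (hu_int.sub hgg_int).abs (integrable_const _) hga
        _ = ε := by simp
    have habs2 : |∫ ω, v ω ∂P - ∫ ω, hh ω ∂P| ≤ ε := by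
      rw [← integral_sub hv_int hhh_int]
      calc |∫ ω, (v ω - hh ω) ∂P| ≤ ∫ ω, |v ω - hh ω| ∂P := by
            simpa [Real.norm_eq_abs] using
              norm_integral_le_integral_norm (μ := P) (fun ω => v ω - hh ω)
        _ ≤ ∫ _ω : Ω, ε ∂P := integral_mono (hv_int.sub hhh_int).abs (integrable_const _) hha
        _ = ε := by simp
    calc |∫ ω, u ω ∂P - ∫ ω, v ω ∂P|
        = |(∫ ω, u ω ∂P - ∫ ω, gg ω ∂P) + (∫ ω, hh ω ∂P - ∫ ω, v ω ∂P)| := by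
          rw [hghint]; ring_nf
      _ ≤ |∫ ω, u ω ∂P - ∫ ω, gg ω ∂P| + |∫ ω, hh ω ∂P - ∫ ω, v ω ∂P| := abs_add_le _ _
      _ ≤ ε + ε := add_le_add habs1 (by rw [abs_sub_comm]; exact habs2)
      _ = 2 * ε := by ring
  have hdiff : |∫ ω, u ω ∂P - ∫ ω, v ω ∂P| = 0 := by
    by_contra h
    have hpos : 0 < |∫ ω, u ω ∂P - ∫ ω, v ω ∂P| :=
      lt_of_le_of_ne (abs_nonneg _) (Ne.symm h)
    have := hkey (|∫ ω, u ω ∂P - ∫ ω, v ω ∂P| / 4) (by positivity)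
    linarith
  have := abs_eq_zero.mp hdiff
  linarith [this]

end Core

open scoped ENNReal NNReal in
/-- Equivalence of the prior-averaged discounted cost and the infinite-horizon discounted
cost with the Rao-entropy stage cost. -/
theorem prior_averaged_cost_eq_rao_cost
    {Ω : Type*} [F : MeasurableSpace Ω] (P : Measure Ω) [IsProbabilityMeasure P]
    {M : Type*} [MetricSpace M] [CompactSpace M] [MeasurableSpace M] [BorelSpace M]
    (X : Ω → M) (hX : Measurable X)
    (β : ℝ) (hβ : β ∈ Set.Ioo (0 : ℝ) 1)
    (G : ℕ → MeasurableSpace Ω) (hG : ∀ t, G t ≤ F)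
    (b : ℕ → Ω → ProbabilityMeasure M)
    (hb_meas : ∀ t,
      @Measurable Ω (ProbabilityMeasure M) (G t) (borel (ProbabilityMeasure M)) (b t))
    (hb : ∀ t, ∀ A : Set M, MeasurableSet A →
      (fun ω => ((b t ω : Measure M) A).toReal)
        =ᵐ[P] P[fun ω => (X ⁻¹' A).indicator (fun _ => (1 : ℝ)) ω | G t]) :
    Integrable (fun ω => ∑' t : ℕ, β ^ t * ∫ m', dist m' (X ω) ∂(b t ω : Measure M)) P ∧
    Integrable (fun ω => ∑' t : ℕ, β ^ t * raoEntropy (b t ω : Measure M)) P ∧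
    ∫ ω, (∑' t : ℕ, β ^ t * ∫ m', dist m' (X ω) ∂(b t ω : Measure M)) ∂P
      = ∫ ω, (∑' t : ℕ, β ^ t * raoEntropy (b t ω : Measure M)) ∂P := by
  classical
  obtain ⟨hβ0, hβ1⟩ := hβ
  have hΩ : Nonempty Ω := by
    by_contra h
    rw [not_nonempty_iff] at h
    have h1 : P Set.univ = 1 := measure_univ
    rw [Set.univ_eq_empty_iff.mpr h, measure_empty] at h1
    exact zero_ne_one h1
  haveI hM : Nonempty M := ⟨X hΩ.some⟩
  obtain ⟨C, hCb⟩ := Metric.isBounded_iff.mp (isCompact_univ (X := M)).isBounded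
  have hC : ∀ x y : M, dist x y ≤ C := fun x y => hCb (Set.mem_univ x) (Set.mem_univ y)
  have x₀ : M := X hΩ.some
  have hC0 : 0 ≤ C := le_trans dist_nonneg (hC x₀ x₀)
  -- per-step functions
  set u : ℕ → Ω → ℝ := fun t ω => ∫ m', dist m' (X ω) ∂(b t ω : Measure M) with hu
  set v : ℕ → Ω → ℝ := fun t ω => raoEntropy (b t ω : Measure M) with hv
  have hcore : ∀ t : ℕ, Measurable (u t) ∧ AEStronglyMeasurable (v t) P ∧
      ∫ ω, u t ω ∂P = ∫ ω, v t ω ∂P :=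
    fun t => core_step P (hG t) hX (hb_meas t) (hb t) hC
  -- pointwise bounds
  have hu_nonneg : ∀ t ω, 0 ≤ u t ω := fun t ω => integral_nonneg fun _ => dist_nonneg
  have hu_le : ∀ t ω, u t ω ≤ C := by
    intro t ω
    calc u t ω ≤ ∫ _m' : M, C ∂(b t ω : Measure M) :=
          integral_mono (contIntegrable _ (continuous_id.dist continuous_const))
            (integrable_const C) (fun m' => hC m' (X ω))
      _ = C := by simp
  have hv_nonneg : ∀ t ω, 0 ≤ v t ω := fun t ω => integral_nonneg fun _ => dist_nonneg
  have hv_le : ∀ t ω, v t ω ≤ C := by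
    intro t ω
    calc v t ω ≤ ∫ _p : M × M, C ∂((b t ω : Measure M).prod (b t ω : Measure M)) :=
          integral_mono (contIntegrable _ continuous_dist) (integrable_const C)
            (fun p => hC p.1 p.2)
      _ = C := by simp
  -- summability of the series
  have hgeom : Summable fun t : ℕ => β ^ t * C :=
    (summable_geometric_of_lt_one hβ0.le hβ1).mul_right C
  have hsum_u : ∀ ω, Summable fun t => β ^ t * u t ω := by
    intro ω
    refine Summable.of_nonneg_of_le (fun t => ?_) (fun t => ?_) hgeom
    · exact mul_nonneg (pow_nonneg hβ0.le t) (hu_nonneg t ω)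
    · exact mul_le_mul_of_nonneg_left (hu_le t ω) (pow_nonneg hβ0.le t)
  have hsum_v : ∀ ω, Summable fun t => β ^ t * v t ω := by
    intro ω
    refine Summable.of_nonneg_of_le (fun t => ?_) (fun t => ?_) hgeom
    · exact mul_nonneg (pow_nonneg hβ0.le t) (hv_nonneg t ω)
    · exact mul_le_mul_of_nonneg_left (hv_le t ω) (pow_nonneg hβ0.le t)
  set K : ℝ := ∑' t : ℕ, β ^ t * C with hK
  have hSu_le : ∀ ω, ∑' t : ℕ, β ^ t * u t ω ≤ K :=
    fun ω => Summable.tsum_le_tsum (fun t => mul_le_mul_of_nonneg_left (hu_le t ω)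
      (pow_nonneg hβ0.le t)) (hsum_u ω) hgeom
  have hSv_le : ∀ ω, ∑' t : ℕ, β ^ t * v t ω ≤ K :=
    fun ω => Summable.tsum_le_tsum (fun t => mul_le_mul_of_nonneg_left (hv_le t ω)
      (pow_nonneg hβ0.le t)) (hsum_v ω) hgeom
  have hSu_nonneg : ∀ ω, 0 ≤ ∑' t : ℕ, β ^ t * u t ω :=
    fun ω => tsum_nonneg fun t => mul_nonneg (pow_nonneg hβ0.le t) (hu_nonneg t ω)
  have hSv_nonneg : ∀ ω, 0 ≤ ∑' t : ℕ, β ^ t * v t ω :=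
    fun ω => tsum_nonneg fun t => mul_nonneg (pow_nonneg hβ0.le t) (hv_nonneg t ω)
  -- a.e.-strong measurability of the series
  have hterm_u_meas : ∀ t : ℕ, Measurable (fun ω => β ^ t * u t ω) :=
    fun t => (measurable_const.mul (hcore t).1)
  have hterm_v_meas : ∀ t : ℕ, AEStronglyMeasurable (fun ω => β ^ t * v t ω) P :=
    fun t => (aestronglyMeasurable_const.mul (hcore t).2.1)
  have hSu_meas : Measurable fun ω => ∑' t : ℕ, β ^ t * u t ω := by
    refine measurable_of_tendsto_metrizable
      (f := fun n ω => ∑ t ∈ Finset.range n, β ^ t * u t ω)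
      (fun n => Finset.measurable_sum _ fun t _ => hterm_u_meas t) ?_
    rw [tendsto_pi_nhds]
    exact fun ω => (hsum_u ω).hasSum.tendsto_sum_nat
  have hSv_meas : AEStronglyMeasurable (fun ω => ∑' t : ℕ, β ^ t * v t ω) P := by
    refine aestronglyMeasurable_of_tendsto_ae Filter.atTop
      (f := fun n ω => ∑ t ∈ Finset.range n, β ^ t * v t ω)
      (fun n => Finset.aestronglyMeasurable_fun_sum _ fun t _ => hterm_v_meas t) ?_
    exact Filter.Eventually.of_forall fun ω => (hsum_v ω).hasSum.tendsto_sum_nat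
  -- integrability of the series
  have hSu_int : Integrable (fun ω => ∑' t : ℕ, β ^ t * u t ω) P := by
    refine Integrable.mono' (integrable_const K) hSu_meas.aestronglyMeasurable
      (Filter.Eventually.of_forall fun ω => ?_)
    rw [Real.norm_eq_abs, abs_of_nonneg (hSu_nonneg ω)]
    exact hSu_le ω
  have hSv_int : Integrable (fun ω => ∑' t : ℕ, β ^ t * v t ω) P := by
    refine Integrable.mono' (integrable_const K) hSv_meas
      (Filter.Eventually.of_forall fun ω => ?_)
    rw [Real.norm_eq_abs, abs_of_nonneg (hSv_nonneg ω)]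
    exact hSv_le ω
  refine ⟨hSu_int, hSv_int, ?_⟩
  -- swap integral and sum
  have hbound : ∀ (w : ℕ → Ω → ℝ), (∀ t ω, 0 ≤ w t ω) → (∀ t ω, w t ω ≤ C) →
      (∀ t, AEStronglyMeasurable (fun ω => β ^ t * w t ω) P) →
      ∑' t : ℕ, ∫⁻ ω, ‖β ^ t * w t ω‖₊ ∂P ≠ ⊤ := by
    intro w hw0 hwC hwm
    have hle : ∀ t : ℕ, ∫⁻ ω, ‖β ^ t * w t ω‖₊ ∂P ≤ ENNReal.ofReal (β ^ t * C) := by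
      intro t
      have hpt : ∀ ω, (‖β ^ t * w t ω‖₊ : ℝ≥0∞) ≤ ENNReal.ofReal (β ^ t * C) := by
        intro ω
        rw [← enorm_eq_nnnorm, Real.enorm_eq_ofReal_abs]
        refine ENNReal.ofReal_le_ofReal ?_
        rw [abs_of_nonneg (mul_nonneg (pow_nonneg hβ0.le t) (hw0 t ω))]
        exact mul_le_mul_of_nonneg_left (hwC t ω) (pow_nonneg hβ0.le t)
      calc ∫⁻ ω, ‖β ^ t * w t ω‖₊ ∂P ≤ ∫⁻ _ω : Ω, ENNReal.ofReal (β ^ t * C) ∂P :=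
            lintegral_mono hpt
        _ = ENNReal.ofReal (β ^ t * C) := by simp
    refine ne_top_of_le_ne_top ?_ (ENNReal.tsum_le_tsum hle)
    rw [← ENNReal.ofReal_tsum_of_nonneg
      (fun t => mul_nonneg (pow_nonneg hβ0.le t) hC0) hgeom]
    exact ENNReal.ofReal_ne_top
  have hswap_u : ∫ ω, (∑' t : ℕ, β ^ t * u t ω) ∂P = ∑' t : ℕ, ∫ ω, β ^ t * u t ω ∂P :=
    (integral_tsum (f := fun t ω => β ^ t * u t ω)
      (fun t => (hterm_u_meas t).aestronglyMeasurable)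
      (hbound u hu_nonneg hu_le fun t => (hterm_u_meas t).aestronglyMeasurable))
  have hswap_v : ∫ ω, (∑' t : ℕ, β ^ t * v t ω) ∂P = ∑' t : ℕ, ∫ ω, β ^ t * v t ω ∂P :=
    (integral_tsum (f := fun t ω => β ^ t * v t ω) (fun t => hterm_v_meas t)
      (hbound v hv_nonneg hv_le hterm_v_meas))
  rw [hswap_u, hswap_v]
  refine tsum_congr fun t => ?_
  rw [integral_const_mul, integral_const_mul, (hcore t).2.2]
end

section
/- Let m ≥ 1 and M ≥ 1 be integers, and set a = ⌊m/2⌋. For every probability vector p = (p₁, …, p_m) (i.e., p_i ≥ 0 and ∑_{i=1}^m p_i = 1) there exist nonnegative integers k₁, …, k_m with ∑_{i=1}^m k_i = M such that the vector q with q_i = k_i/M satisfies ∑_{i=1}^m |p_i − q_i| ≤ (2/M) · a(m − a)/m. -/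
open Finset

/-- Greedy selection: from any finset one can pick `n` elements whose sum is at least
the proportional share `n/card` of the total sum. -/
lemma exists_top_subset {ι : Type*} [DecidableEq ι] (s : Finset ι) (f : ι → ℝ)
    (n : ℕ) (hn : n ≤ s.card) :
    ∃ t ⊆ s, t.card = n ∧ (n : ℝ) * ∑ i ∈ s, f i ≤ (s.card : ℝ) * ∑ i ∈ t, f i := by
  induction n with
  | zero => exact ⟨∅, empty_subset s, rfl, by simp⟩
  | succ n ih =>
    obtain ⟨t, hts, htc, hle⟩ := ih (Nat.le_of_succ_le hn)
    have hne : (s \ t).Nonempty := by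
      rw [← Finset.card_pos, Finset.card_sdiff_of_subset hts, htc]
      omega
    have hcard : (s \ t).card = s.card - n := by rw [Finset.card_sdiff_of_subset hts, htc]
    have hrne : ((s \ t).card : ℝ) ≠ 0 := by
      exact_mod_cast (Finset.card_pos.mpr hne).ne'
    have havg0 : ∑ j ∈ s \ t, (fun _ => (∑ j ∈ s \ t, f j) / ((s \ t).card : ℝ)) j
        ≤ ∑ j ∈ s \ t, f j := by
      rw [Finset.sum_const, nsmul_eq_mul, mul_div_cancel₀ _ hrne]
    obtain ⟨i, hi, hfi⟩ := Finset.exists_le_of_sum_le hne havg0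
    have hit : i ∉ t := (Finset.mem_sdiff.mp hi).2
    have his : i ∈ s := (Finset.mem_sdiff.mp hi).1
    refine ⟨insert i t, Finset.insert_subset his hts,
      by rw [Finset.card_insert_of_notMem hit, htc], ?_⟩
    rw [Finset.sum_insert hit]
    have hsd : ∑ j ∈ s \ t, f j = ∑ j ∈ s, f j - ∑ j ∈ t, f j :=
      Finset.sum_sdiff_eq_sub hts
    set c : ℝ := (s.card : ℝ) with hc
    set r : ℝ := ((s \ t).card : ℝ) with hr
    have hr1 : (1 : ℝ) ≤ r := by
      rw [hr]; exact_mod_cast Finset.card_pos.mpr hne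
    have hcr : c = n + r := by
      rw [hc, hr, hcard]
      have h : n ≤ s.card := Nat.le_of_succ_le hn
      push_cast [Nat.cast_sub h]
      ring
    have havg : ∑ j ∈ s, f j - ∑ j ∈ t, f j ≤ r * f i := by
      rw [← hsd]
      calc ∑ j ∈ s \ t, f j = r * ((∑ j ∈ s \ t, f j) / r) := by
            rw [mul_div_cancel₀ _ (by rw [hr]; exact hrne)]
        _ ≤ r * f i := mul_le_mul_of_nonneg_left hfi (by linarith)
    set T : ℝ := ∑ j ∈ s, f j
    set A : ℝ := ∑ j ∈ t, f j
    have hc0 : (0 : ℝ) ≤ c := by rw [hc]; positivity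
    have h1 : (n : ℝ) * T * (r - 1) ≤ c * A * (r - 1) :=
      mul_le_mul_of_nonneg_right hle (by linarith)
    have h2 : c * (T - A) ≤ c * (r * f i) := mul_le_mul_of_nonneg_left havg hc0
    have h3 : c * T = (n : ℝ) * T + r * T := by rw [hcr]; ring
    have key : ((n : ℝ) + 1) * T * r ≤ c * (f i + A) * r := by nlinarith [h1, h2, h3]
    have hrpos : (0 : ℝ) < r := by linarith
    have := le_of_mul_le_mul_right key hrpos
    push_cast
    linarith [this]

lemma int_quad_bound (d a m : ℤ) (hd0 : 0 ≤ d) (hdm : d ≤ m)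
    (h1 : 2 * a ≤ m) (h2 : m ≤ 2 * a + 1) : d * (m - d) ≤ a * (m - a) := by
  rcases le_or_gt d a with h | h
  · nlinarith
  · nlinarith

/-- ℓ¹-approximation of a point of the probability simplex in `ℝ^m` by the rational grid
with common denominator `M`: there exist nonnegative integers `k₁, …, k_m` summing to `M`
such that `∑ |pᵢ − kᵢ/M| ≤ (2/M) · a(m − a)/m`, where `a = ⌊m/2⌋`. -/
theorem simplex_grid_l1_approx (m M : ℕ) (hm : 1 ≤ m) (hM : 1 ≤ M)
    (p : Fin m → ℝ) (hp : ∀ i, 0 ≤ p i) (hsum : ∑ i, p i = 1) :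
    ∃ k : Fin m → ℕ, (∑ i, k i) = M ∧
      ∑ i, |p i - (k i : ℝ) / M|
        ≤ (2 / M) * (((m / 2 : ℕ) : ℝ) * ((m : ℝ) - ((m / 2 : ℕ) : ℝ)) / m) := by
  have hMpos : (0 : ℝ) < M := by exact_mod_cast hM
  have hmpos : (0 : ℝ) < m := by exact_mod_cast hm
  set g : Fin m → ℤ := fun i => ⌊(M : ℝ) * p i⌋ with hg
  have hg0 : ∀ i, 0 ≤ g i := fun i =>
    Int.floor_nonneg.mpr (mul_nonneg hMpos.le (hp i))
  set f : Fin m → ℝ := fun i => (M : ℝ) * p i - g i with hf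
  have hf0 : ∀ i, 0 ≤ f i := fun i => by
    simpa [hf, hg] using Int.fract_nonneg ((M : ℝ) * p i)
  have hf1 : ∀ i, f i < 1 := fun i => by
    simpa [hf, hg] using Int.fract_lt_one ((M : ℝ) * p i)
  have hsumMp : ∑ i, (M : ℝ) * p i = M := by
    rw [← Finset.mul_sum, hsum, mul_one]
  set D : ℤ := M - ∑ i, g i with hD
  have hDf : (D : ℝ) = ∑ i, f i := by
    push_cast [hD]
    rw [Finset.sum_sub_distrib, hsumMp]
  have hD0 : 0 ≤ D := by
    have : (0 : ℝ) ≤ (D : ℝ) := hDf ▸ Finset.sum_nonneg fun i _ => hf0 i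
    exact_mod_cast this
  have hDm : D ≤ m := by
    have : (D : ℝ) ≤ m := by
      rw [hDf]
      calc ∑ i, f i ≤ ∑ _i : Fin m, (1 : ℝ) :=
            Finset.sum_le_sum fun i _ => (hf1 i).le
        _ = m := by simp
    exact_mod_cast this
  set d : ℕ := D.toNat with hd
  have hdD : (d : ℤ) = D := Int.toNat_of_nonneg hD0
  have hdm : d ≤ m := by omega
  obtain ⟨S, hS, hScard, hSsum⟩ := exists_top_subset Finset.univ f d (by simpa using hdm)
  simp only [Finset.card_univ, Fintype.card_fin] at hSsum
  have hTd : ∑ i, f i = (d : ℝ) := by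
    rw [← hDf, ← hdD]; push_cast; ring
  refine ⟨fun i => (g i).toNat + (if i ∈ S then 1 else 0), ?_, ?_⟩
  · -- sum of k is M
    have key : ((∑ i, ((g i).toNat + (if i ∈ S then 1 else 0))) : ℤ) = M := by
      push_cast [Finset.sum_add_distrib]
      have h1 : ∑ i, ((g i).toNat : ℤ) = ∑ i, g i :=
        Finset.sum_congr rfl fun i _ => Int.toNat_of_nonneg (hg0 i)
      have h2 : (∑ i : Fin m, if i ∈ S then (1 : ℤ) else 0) = (d : ℤ) := by
        rw [Finset.sum_ite_mem, Finset.univ_inter, Finset.sum_const, hScard]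
        simp
      rw [h1] at *
      rw [h2] at *
      linarith [hdD, hD]
    exact_mod_cast key
  · -- the bound
    have habs : ∀ i, |p i - ((((g i).toNat + (if i ∈ S then 1 else 0)) : ℕ) : ℝ) / M|
        = (if i ∈ S then 1 - f i else f i) / M := by
      intro i
      have hgi : (((g i).toNat : ℕ) : ℝ) = (g i : ℝ) := by
        exact_mod_cast Int.toNat_of_nonneg (hg0 i)
      have hki : ((((g i).toNat + (if i ∈ S then 1 else 0)) : ℕ) : ℝ)
          = (g i : ℝ) + (if i ∈ S then 1 else 0) := by
        push_cast
        rw [hgi]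
      rw [hki]
      have hrw : p i - ((g i : ℝ) + (if i ∈ S then 1 else 0)) / M
          = (f i - (if i ∈ S then 1 else 0)) / M := by
        rw [hf]
        field_simp
        ring
      rw [hrw, abs_div, abs_of_pos hMpos]
      congr 1
      split
      · rw [abs_of_nonpos (by linarith [hf1 i])]; ring
      · rw [abs_of_nonneg (by simpa using hf0 i)]; simp
    rw [Finset.sum_congr rfl fun i _ => habs i, ← Finset.sum_div]
    have hsplit : (∑ i, if i ∈ S then 1 - f i else f i)
        = (∑ i, f i) + ((d : ℝ) - 2 * ∑ i ∈ S, f i) := by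
      have hpt : ∀ i, (if i ∈ S then 1 - f i else f i)
          = f i + (if i ∈ S then 1 - 2 * f i else 0) := by
        intro i; split <;> ring
      have h2 : ∑ i ∈ S, ((1 : ℝ) - 2 * f i) = (d : ℝ) - 2 * ∑ i ∈ S, f i := by
        rw [Finset.sum_sub_distrib, Finset.sum_const, ← Finset.mul_sum, hScard,
          nsmul_eq_mul, mul_one]
      rw [Finset.sum_congr rfl fun i _ => hpt i, Finset.sum_add_distrib,
        Finset.sum_ite_mem, Finset.univ_inter, h2]
    rw [hTd] at hSsum
    rw [hsplit, hTd]
    set B : ℝ := ∑ i ∈ S, f i with hB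
    set a : ℕ := m / 2 with ha
    have hq : (d : ℤ) * (m - d) ≤ (a : ℤ) * (m - a) :=
      int_quad_bound d a m (by exact_mod_cast Nat.zero_le d) (by exact_mod_cast hdm)
        (by omega) (by omega)
    have hqR : (d : ℝ) * ((m : ℝ) - d) ≤ (a : ℝ) * ((m : ℝ) - a) := by
      exact_mod_cast hq
    have h' : ((d : ℝ) + ((d : ℝ) - 2 * B)) * m ≤ 2 * ((a : ℝ) * ((m : ℝ) - a)) := by
      nlinarith [hSsum, hqR]
    calc ((d : ℝ) + ((d : ℝ) - 2 * B)) / M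
        = (((d : ℝ) + ((d : ℝ) - 2 * B)) * m) / (m * M) := by
          field_simp
      _ ≤ (2 * ((a : ℝ) * ((m : ℝ) - a))) / (m * M) := by
          gcongr
      _ = 2 / M * ((a : ℝ) * ((m : ℝ) - a) / m) := by
          ring
end

section
/- Let (S, d) be a compact metric space with diameter D = sup{d(x,y) : x, y ∈ S}. Let S_n = {s₁, …, s_m} ⊆ S be a finite subset and let Q_n : S → S_n be a Borel measurable quantizer with d(s, Q_n(s)) ≤ 1/n for all s ∈ S. For an integer M ≥ 1, let G_M denote the set of probability measures on S of the form ∑_{i=1}^m (k_i/M) δ_{s_i} with k_i nonnegative integers and ∑_{i=1}^m k_i = M. Then for every Borel probability measure μ on S, inf_{ν ∈ G_M} W₁(μ, ν) ≤ 1/n + (D/M) · a(m − a)/m, where a = ⌊m/2⌋. -/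
open MeasureTheory Finset

lemma quad_max (m r a : ℕ) (hr : r ≤ m) (ha : a = m / 2) :
    (r : ℝ) * ((m : ℝ) - r) ≤ (a : ℝ) * ((m : ℝ) - a) := by
  have h1 : 2 * a ≤ m := by omega
  have h2 : m ≤ 2 * a + 1 := by omega
  have h1' : 2 * (a : ℝ) ≤ m := by exact_mod_cast h1
  have h2' : (m : ℝ) ≤ 2 * a + 1 := by exact_mod_cast h2
  have hr' : (r : ℝ) ≤ m := by exact_mod_cast hr
  rcases le_or_gt (r : ℝ) (a : ℝ) with h | h
  · nlinarith [mul_nonneg (sub_nonneg.2 h) (by nlinarith : (0:ℝ) ≤ (m:ℝ) - a - r)]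
  · have hra : (a : ℝ) + 1 ≤ r := by
      have : a < r := by exact_mod_cast h
      exact_mod_cast this
    nlinarith

lemma card_filter_lt_aux (m t : ℕ) (ht : t ≤ m) :
    (Finset.univ.filter (fun j : Fin m => (j : ℕ) < t)).card = t := by
  rw [Finset.card_filter]
  rw [Fin.sum_univ_eq_sum_range (fun j => if j < t then 1 else 0) m]
  rw [Finset.range_eq_Ico, ← Finset.sum_Ico_consecutive _ (Nat.zero_le t) ht]
  rw [Finset.sum_ite_of_true (by intro x hx; simp at hx; omega),
      Finset.sum_ite_of_false (by intro x hx; simp at hx; omega)]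
  simp [Nat.card_Ico]

lemma card_filter_not_lt_aux (m t : ℕ) (ht : t ≤ m) :
    (Finset.univ.filter (fun j : Fin m => ¬ (j : ℕ) < t)).card = m - t := by
  have h := Finset.card_filter_add_card_filter_not
    (s := (Finset.univ : Finset (Fin m))) (p := fun j : Fin m => (j : ℕ) < t)
  simp only [card_filter_lt_aux m t ht, Finset.card_univ, Fintype.card_fin] at h
  omega

lemma round_exists (m M : ℕ) (hm : 1 ≤ m) (hM : 1 ≤ M) (P : Fin m → ℝ)
    (hP : ∀ i, 0 ≤ P i) (hsum : ∑ i, P i = 1) :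
    ∃ k : Fin m → ℕ, (∑ i, k i) = M ∧
      ∑ i, max (P i - (k i : ℝ) / M) 0
        ≤ ((m / 2 : ℕ) : ℝ) * ((m : ℝ) - ((m / 2 : ℕ) : ℝ)) / m / M := by
  have hMpos : (0:ℝ) < M := by exact_mod_cast hM
  have hmpos : (0:ℝ) < m := by exact_mod_cast hm
  set g : Fin m → ℝ := fun i => P i * M with hg
  have hg0 : ∀ i, 0 ≤ g i := fun i => mul_nonneg (hP i) hMpos.le
  set F : Fin m → ℕ := fun i => ⌊g i⌋₊ with hF
  set f : Fin m → ℝ := fun i => g i - F i with hf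
  have hf0 : ∀ i, 0 ≤ f i := fun i => sub_nonneg.2 (Nat.floor_le (hg0 i))
  have hf1 : ∀ i, f i < 1 := fun i => sub_lt_iff_lt_add.2 (by
    simpa [add_comm] using Nat.lt_floor_add_one (g i))
  have hsg : ∑ i, g i = M := by
    rw [hg]; rw [← Finset.sum_mul, hsum, one_mul]
  have hsf : ∑ i, f i = (M : ℝ) - ∑ i, (F i : ℝ) := by
    simp [hf, Finset.sum_sub_distrib, hsg]
  have hFleM : ∑ i, F i ≤ M := by
    have : ((∑ i, F i : ℕ) : ℝ) ≤ M := by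
      push_cast
      calc ∑ i, (F i : ℝ) ≤ ∑ i, g i := Finset.sum_le_sum fun i _ => Nat.floor_le (hg0 i)
        _ = M := hsg
    exact_mod_cast this
  set r : ℕ := M - ∑ i, F i with hrdef
  have hrf : (r : ℝ) = ∑ i, f i := by
    rw [hsf, hrdef]
    push_cast [Nat.cast_sub hFleM]
    ring
  have hrm : r < m := by
    have : (r : ℝ) < m := by
      rw [hrf]
      calc ∑ i, f i < ∑ _i : Fin m, (1:ℝ) := by
            apply Finset.sum_lt_sum_of_nonempty
            · exact Finset.univ_nonempty_iff.2 ⟨⟨0, hm⟩⟩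
            · exact fun i _ => hf1 i
        _ = m := by simp
    exact_mod_cast this
  set σ := Tuple.sort f with hσ
  have hmono : Monotone (f ∘ σ) := Tuple.monotone_sort f
  set ind : Fin m → ℕ := fun j => if m - r ≤ (j : ℕ) then 1 else 0 with hind
  refine ⟨fun i => F i + ind (σ.symm i), ?_, ?_⟩
  · rw [Finset.sum_add_distrib]
    have h1 : ∑ i, ind (σ.symm i) = ∑ j, ind j := Equiv.sum_comp σ.symm ind
    have h2 : ∑ j : Fin m, ind j = r := by
      rw [hind]
      rw [Fin.sum_univ_eq_sum_range (fun j => if m - r ≤ j then 1 else 0) m]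
      rw [Finset.range_eq_Ico, ← Finset.sum_Ico_consecutive _ (Nat.zero_le (m - r)) (Nat.sub_le m r)]
      rw [Finset.sum_ite_of_false (by intro x hx; simp at hx; omega),
          Finset.sum_ite_of_true (by intro x hx; simp at hx; omega)]
      simp [Nat.card_Ico]
      omega
    rw [h1, h2]
    omega
  · -- error bound
    have key : ∀ i, max (P i - ((F i + ind (σ.symm i) : ℕ) : ℝ) / M) 0
        = max (f i - ind (σ.symm i)) 0 / M := by
      intro i
      have h1 : P i - ((F i + ind (σ.symm i) : ℕ) : ℝ) / M
          = (f i - ind (σ.symm i)) / M := by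
        simp only [hf, hg]
        push_cast
        field_simp
        ring
      rw [h1]
      have h2 := max_div_div_right hMpos.le (f i - (ind (σ.symm i) : ℝ)) 0
      rw [zero_div] at h2
      exact h2
    rw [Finset.sum_congr rfl (fun i _ => key i), ← Finset.sum_div]
    have hres : ∀ i, max (f i - (ind (σ.symm i) : ℝ)) 0
        = if ((σ.symm i : Fin m) : ℕ) < m - r then f i else 0 := by
      intro i
      by_cases h : m - r ≤ ((σ.symm i : Fin m) : ℕ)
      · have hi1 : ind (σ.symm i) = 1 := by rw [hind]; simp [h]
        rw [hi1, if_neg (Nat.not_lt.2 h)]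
        push_cast
        exact max_eq_right (by linarith [hf1 i])
      · push_neg at h
        have hi0 : ind (σ.symm i) = 0 := by rw [hind]; simp [Nat.not_le.2 h]
        rw [hi0, if_pos h]
        push_cast
        rw [sub_zero]
        exact max_eq_left (hf0 i)
    rw [Finset.sum_congr rfl (fun i _ => hres i)]
    -- reindex by σ
    have hre : (∑ i : Fin m, if ((σ.symm i : Fin m) : ℕ) < m - r then f i else 0)
        = ∑ j : Fin m, (if (j : ℕ) < m - r then f (σ j) else 0) := by
      rw [← Equiv.sum_comp σ (fun i => if ((σ.symm i : Fin m) : ℕ) < m - r then f i else 0)]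
      simp
    rw [hre]
    set low := Finset.univ.filter (fun j : Fin m => (j : ℕ) < m - r) with hlowdef
    set high := Finset.univ.filter (fun j : Fin m => ¬ (j : ℕ) < m - r) with hhighdef
    have hcardlow : low.card = m - r := card_filter_lt_aux m (m - r) (Nat.sub_le m r)
    have hcardhigh : high.card = r := by
      rw [hhighdef, card_filter_not_lt_aux m (m - r) (Nat.sub_le m r)]
      omega
    have hSsplit : (∑ j : Fin m, if (j : ℕ) < m - r then f (σ j) else 0)
        = ∑ j ∈ low, f (σ j) := by
      rw [Finset.sum_ite, Finset.sum_const_zero, add_zero, hlowdef]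
    rw [hSsplit]
    set Slow := ∑ j ∈ low, f (σ j) with hSlowdef
    set Shigh := ∑ j ∈ high, f (σ j) with hShighdef
    have hsplit : Slow + Shigh = r := by
      rw [hSlowdef, hShighdef, hlowdef, hhighdef, Finset.sum_filter_add_sum_filter_not]
      rw [Equiv.sum_comp σ f, hrf]
    have hSlow0 : 0 ≤ Slow := Finset.sum_nonneg fun j _ => hf0 _
    have hShigh0 : 0 ≤ Shigh := Finset.sum_nonneg fun j _ => hf0 _
    have hmr : ((m - r : ℕ) : ℝ) = (m : ℝ) - r := by
      push_cast [Nat.cast_sub hrm.le]; ring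
    have hkey : (r : ℝ) * Slow ≤ ((m : ℝ) - r) * Shigh := by
      calc (r : ℝ) * Slow = ∑ _j ∈ high, Slow := by
            rw [Finset.sum_const, hcardhigh, nsmul_eq_mul]
        _ ≤ ∑ j ∈ high, ((m : ℝ) - r) * f (σ j) := by
            apply Finset.sum_le_sum
            intro j' hj'
            have hstep : ∀ j ∈ low, f (σ j) ≤ f (σ j') := by
              intro j hj
              simp only [hlowdef, hhighdef, Finset.mem_filter] at hj hj'
              exact hmono (by omega : j ≤ j')
            calc Slow ≤ ∑ _j ∈ low, f (σ j') := Finset.sum_le_sum hstep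
              _ = ((m : ℝ) - r) * f (σ j') := by
                  rw [Finset.sum_const, hcardlow, nsmul_eq_mul, hmr]
        _ = ((m : ℝ) - r) * Shigh := by rw [← Finset.mul_sum]
    have hmS : (m : ℝ) * Slow ≤ (r : ℝ) * ((m : ℝ) - r) := by
      nlinarith
    have hq := quad_max m r (m/2) hrm.le rfl
    have hfinal : Slow ≤ ((m / 2 : ℕ) : ℝ) * ((m : ℝ) - ((m / 2 : ℕ) : ℝ)) / m := by
      rw [le_div_iff₀ hmpos]
      nlinarith
    rw [div_le_div_iff₀ hMpos hMpos]
    nlinarith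

/-- The 1-Wasserstein distance between two Borel probability measures, defined as the
infimum over couplings `ψ` (probability measures on `S × S` with marginals `μ` and `ν`)
of the integral of the distance. -/
noncomputable def W1 {S : Type*} [MeasurableSpace S] [PseudoMetricSpace S]
    (μ ν : Measure S) : ℝ :=
  sInf {r : ℝ | ∃ ψ : Measure (S × S), IsProbabilityMeasure ψ ∧
    ψ.map Prod.fst = μ ∧ ψ.map Prod.snd = ν ∧
    r = ∫ p, dist p.1 p.2 ∂ψ}

/-- Quantization error bound for the belief space: on a compact metric space `S` of
diameter `D`, with a finite set `{s₁, …, s_m}` and a measurable quantizer `Q` mapping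
into it with `d(s, Q(s)) ≤ 1/n`, every Borel probability measure `μ` on `S` is within
`1/n + (D/M)·a(m−a)/m` (where `a = ⌊m/2⌋`) in `W₁` of some measure of the form
`∑ᵢ (kᵢ/M) δ_{sᵢ}` with `kᵢ` nonnegative integers summing to `M`. -/
theorem quantized_belief_W1_bound
    {S : Type*} [MetricSpace S] [CompactSpace S] [MeasurableSpace S] [BorelSpace S]
    (n : ℕ) (hn : 1 ≤ n) (m : ℕ) (hm : 1 ≤ m) (s : Fin m → S)
    (Q : S → S) (hQ : Measurable Q) (hQrange : ∀ x, ∃ i, Q x = s i)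
    (hQnear : ∀ x, dist x (Q x) ≤ 1 / n)
    (M : ℕ) (hM : 1 ≤ M)
    (μ : Measure S) [IsProbabilityMeasure μ] :
    sInf {r : ℝ | ∃ k : Fin m → ℕ, (∑ i, k i) = M ∧
        r = W1 μ (∑ i, ((k i : ENNReal) / (M : ENNReal)) • Measure.dirac (s i))}
      ≤ 1 / n + (Metric.diam (Set.univ : Set S) / M) *
          (((m / 2 : ℕ) : ℝ) * ((m : ℝ) - ((m / 2 : ℕ) : ℝ)) / m) := by
  classical
  set D : ℝ := Metric.diam (Set.univ : Set S) with hD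
  have hD0 : 0 ≤ D := Metric.diam_nonneg
  have hn0 : (0:ℝ) < n := by exact_mod_cast hn
  have hM0 : (0:ℝ) < M := by exact_mod_cast hM
  have hm0 : (0:ℝ) < m := by exact_mod_cast hm
  -- the partition
  set A : Fin m → Set S := fun i => Q ⁻¹' {s i} \ ⋃ (j : Fin m) (_ : j < i), Q ⁻¹' {s j} with hA
  have hAmeas : ∀ i, MeasurableSet (A i) := by
    intro i
    exact (hQ (measurableSet_singleton _)).diff
      (MeasurableSet.iUnion fun j => MeasurableSet.iUnion fun _ => hQ (measurableSet_singleton _))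
  have hAQ : ∀ i, ∀ x ∈ A i, Q x = s i := by
    intro i x hx
    exact hx.1
  have hAdisj : Pairwise (Function.onFun Disjoint A) := by
    intro i j hij
    rw [Function.onFun, Set.disjoint_left]
    rintro x ⟨hx1, hx2⟩ ⟨hy1, hy2⟩
    rcases hij.lt_or_gt with h | h
    · exact hy2 (Set.mem_iUnion.2 ⟨i, Set.mem_iUnion.2 ⟨h, hx1⟩⟩)
    · exact hx2 (Set.mem_iUnion.2 ⟨j, Set.mem_iUnion.2 ⟨h, hy1⟩⟩)
  have hAunion : (⋃ i, A i) = Set.univ := by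
    apply Set.eq_univ_of_forall
    intro x
    have hne : (Finset.univ.filter (fun i : Fin m => Q x = s i)).Nonempty := by
      obtain ⟨i, hi⟩ := hQrange x
      exact ⟨i, by simp [hi]⟩
    set i0 := (Finset.univ.filter (fun i : Fin m => Q x = s i)).min' hne with hi0
    have hmem : Q x = s i0 := by
      have := Finset.min'_mem _ hne
      simpa using this
    refine Set.mem_iUnion.2 ⟨i0, hmem, ?_⟩
    intro hx
    rw [Set.mem_iUnion] at hx
    obtain ⟨j, hj⟩ := hx
    rw [Set.mem_iUnion] at hj
    obtain ⟨hji, hjx⟩ := hj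
    have : i0 ≤ j := Finset.min'_le _ _ (by simpa using hjx)
    exact absurd (lt_of_le_of_lt this hji) (lt_irrefl _)
  -- masses
  set p : Fin m → ENNReal := fun i => μ (A i) with hp
  have hpfin : ∀ i, p i ≠ ⊤ := fun i => (measure_lt_top μ (A i)).ne
  have hpsum : ∑ i, p i = 1 := by
    rw [hp]
    have h1 : μ (⋃ i, A i) = ∑' i, μ (A i) := measure_iUnion hAdisj hAmeas
    rw [hAunion] at h1
    rw [← tsum_fintype (L := SummationFilter.unconditional _)]
    rw [← h1, measure_univ]
  -- apply rounding to the real masses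
  set P : Fin m → ℝ := fun i => (p i).toReal with hPdef
  have hP0 : ∀ i, 0 ≤ P i := fun i => ENNReal.toReal_nonneg
  have hPsum : ∑ i, P i = 1 := by
    rw [hPdef]
    rw [← ENNReal.toReal_sum (fun i _ => hpfin i), hpsum, ENNReal.toReal_one]
  obtain ⟨k, hk, hkerr⟩ := round_exists m M hm hM P hP0 hPsum
  set q : Fin m → ENNReal := fun i => (k i : ENNReal) / (M : ENNReal) with hq
  have hMne : ((M : ENNReal)) ≠ 0 := by
    simp only [ne_eq, Nat.cast_eq_zero]; omega
  have hMnetop : ((M : ENNReal)) ≠ ⊤ := ENNReal.natCast_ne_top M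
  have hqfin : ∀ i, q i ≠ ⊤ := by
    intro i
    rw [hq]
    exact (ENNReal.div_lt_top (ENNReal.natCast_ne_top _) hMne).ne
  have hqsum : ∑ i, q i = 1 := by
    simp only [hq]
    simp only [div_eq_mul_inv]
    rw [← Finset.sum_mul, ← Nat.cast_sum, hk]
    rw [← div_eq_mul_inv]
    exact ENNReal.div_self hMne hMnetop
  have hqtoReal : ∀ i, (q i).toReal = (k i : ℝ) / M := by
    intro i
    rw [hq]
    simp [ENNReal.toReal_div]
  -- T
  set T : ENNReal := ∑ i, (p i - q i) with hT
  set T' : ENNReal := ∑ i, (q i - p i) with hT'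
  have hminp : ∀ i, min (p i) (q i) + (p i - q i) = p i := by
    intro i
    rcases le_total (p i) (q i) with h | h
    · rw [min_eq_left h, tsub_eq_zero_of_le h, add_zero]
    · rw [min_eq_right h, add_comm, tsub_add_cancel_of_le h]
  have hminq : ∀ i, min (p i) (q i) + (q i - p i) = q i := by
    intro i
    rcases le_total (p i) (q i) with h | h
    · rw [min_eq_left h, add_comm, tsub_add_cancel_of_le h]
    · rw [min_eq_right h, tsub_eq_zero_of_le h, add_zero]
  have hminfin : (∑ i, min (p i) (q i)) ≠ ⊤ := by
    refine (lt_of_le_of_lt (Finset.sum_le_sum fun i _ => min_le_left _ _) ?_).ne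
    rw [hpsum]; exact ENNReal.one_lt_top
  have hTT' : T = T' := by
    have h1 : (∑ i, min (p i) (q i)) + T = 1 := by
      rw [hT, ← Finset.sum_add_distrib, Finset.sum_congr rfl fun i _ => hminp i, hpsum]
    have h2 : (∑ i, min (p i) (q i)) + T' = 1 := by
      rw [hT', ← Finset.sum_add_distrib, Finset.sum_congr rfl fun i _ => hminq i, hqsum]
    have := h1.trans h2.symm
    exact (ENNReal.add_right_inj hminfin).1 this
  have hTle1 : T ≤ 1 := by
    rw [hT, ← hpsum]
    exact Finset.sum_le_sum fun i _ => tsub_le_self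
  have hTfin : T ≠ ⊤ := (lt_of_le_of_lt hTle1 ENNReal.one_lt_top).ne
  -- coupling matrix
  set c : Fin m → Fin m → ENNReal :=
    fun i j => (if i = j then min (p i) (q i) else 0) + (p i - q i) * (q j - p j) / T with hc
  have hsumqp : ∑ j, (q j - p j) = T := by rw [← hT', ← hTT']
  have hsumpq : ∑ i, (p i - q i) = T := by rw [← hT]
  have hrowsum : ∀ i, ∑ j, c i j = p i := by
    intro i
    rw [Finset.sum_congr rfl (fun j _ => by rw [hc])]
    rw [Finset.sum_add_distrib]
    rw [Finset.sum_ite_eq Finset.univ i (fun _ => min (p i) (q i))]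
    simp only [Finset.mem_univ, if_true]
    simp only [div_eq_mul_inv]
    rw [← Finset.sum_mul, ← Finset.mul_sum, hsumqp]
    by_cases hT0 : T = 0
    · have hpq0 : p i - q i = 0 := by
        have := hsumpq
        rw [hT0] at this
        exact (Finset.sum_eq_zero_iff.1 this) i (Finset.mem_univ i)
      rw [hpq0, zero_mul, zero_mul, add_zero]
      exact min_eq_left (tsub_eq_zero_iff_le.1 hpq0)
    · rw [mul_assoc, ENNReal.mul_inv_cancel hT0 hTfin, mul_one]
      exact hminp i
  have hcolsum : ∀ j, ∑ i, c i j = q j := by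
    intro j
    rw [Finset.sum_congr rfl (fun i _ => by rw [hc])]
    rw [Finset.sum_add_distrib]
    rw [Finset.sum_ite_eq' Finset.univ j (fun i => min (p i) (q i))]
    simp only [Finset.mem_univ, if_true]
    simp only [div_eq_mul_inv]
    have : ∑ i, (p i - q i) * (q j - p j) * T⁻¹ = (q j - p j) * T * T⁻¹ := by
      rw [Finset.sum_congr rfl (fun i _ => by rw [mul_comm (p i - q i) (q j - p j), mul_assoc])]
      rw [← Finset.mul_sum, ← Finset.sum_mul, hsumpq, mul_assoc]
    rw [this]
    by_cases hT0 : T = 0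
    · have hqp0 : q j - p j = 0 := by
        have := hsumqp
        rw [hT0] at this
        exact (Finset.sum_eq_zero_iff.1 this) j (Finset.mem_univ j)
      rw [hqp0, zero_mul, zero_mul, add_zero]
      exact min_eq_right (tsub_eq_zero_iff_le.1 hqp0)
    · rw [mul_assoc, ENNReal.mul_inv_cancel hT0 hTfin, mul_one]
      exact hminq j
  have htotc : ∑ i, ∑ j, c i j = 1 := by
    rw [Finset.sum_congr rfl (fun i _ => hrowsum i), hpsum]
  have hc0 : ∀ i j, p i = 0 → c i j = 0 := by
    intro i j h0
    have h1 : min (p i) (q i) = 0 := le_zero_iff.1 (h0 ▸ min_le_left (p i) (q i))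
    have h2 : p i - q i = 0 := le_zero_iff.1 (h0 ▸ tsub_le_self)
    simp [hc, h1, h2]
  have hcancel : ∀ i j, c i j / p i * p i = c i j := by
    intro i j
    by_cases h0 : p i = 0
    · rw [h0, hc0 i j h0]
      simp
    · exact ENNReal.div_mul_cancel h0 (hpfin i)
  have hcrossT : ∑ i, ∑ j, (p i - q i) * (q j - p j) / T ≤ T := by
    have heq : ∑ i, ∑ j, (p i - q i) * (q j - p j) / T = T * T * T⁻¹ := by
      simp only [div_eq_mul_inv]
      rw [Finset.sum_congr rfl (fun i _ => by
        rw [← Finset.sum_mul, ← Finset.mul_sum, hsumqp])]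
      rw [← Finset.sum_mul, ← Finset.sum_mul, hsumpq]
    rw [heq, mul_assoc]
    calc T * (T * T⁻¹) ≤ T * 1 := mul_le_mul_right (by
          rw [← div_eq_mul_inv]; exact ENNReal.div_self_le_one) T
      _ = T := mul_one T
  -- the coupling measure
  set ψ : Measure (S × S) :=
    ∑ i, ∑ j, (c i j / p i) • ((μ.restrict (A i)).map (fun x => (x, s j))) with hψ
  have hmeasemb : ∀ j, Measurable (fun x : S => (x, s j)) :=
    fun j => measurable_id.prodMk measurable_const
  have hfst : ψ.map Prod.fst = μ := by
    ext t ht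
    rw [Measure.map_apply measurable_fst ht, hψ]
    rw [Measure.finset_sum_apply]
    have hterm : ∀ i, (∑ j, (c i j / p i) • ((μ.restrict (A i)).map (fun x => (x, s j))))
        (Prod.fst ⁻¹' t) = μ (t ∩ A i) := by
      intro i
      rw [Measure.finset_sum_apply]
      have h1 : ∀ j, ((c i j / p i) • ((μ.restrict (A i)).map (fun x => (x, s j))))
          (Prod.fst ⁻¹' t) = c i j * (p i)⁻¹ * μ (t ∩ A i) := by
        intro j
        rw [Measure.smul_apply, smul_eq_mul, Measure.map_apply (hmeasemb j) (measurable_fst ht)]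
        rw [show (fun x : S => (x, s j)) ⁻¹' (Prod.fst ⁻¹' t) = t from by ext x; simp]
        rw [Measure.restrict_apply ht, div_eq_mul_inv]
      rw [Finset.sum_congr rfl fun j _ => h1 j, ← Finset.sum_mul, ← Finset.sum_mul,
        hrowsum i]
      by_cases h0 : p i = 0
      · have : μ (t ∩ A i) = 0 :=
          measure_mono_null Set.inter_subset_right h0
        rw [this, mul_zero]
      · rw [ENNReal.mul_inv_cancel h0 (hpfin i), one_mul]
    rw [Finset.sum_congr rfl fun i _ => hterm i]
    have hdisj2 : Pairwise (Function.onFun Disjoint (fun i => t ∩ A i)) :=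
      fun i j hij => ((hAdisj hij).mono Set.inter_subset_right Set.inter_subset_right)
    have h2 : ∑ i, μ (t ∩ A i) = μ (⋃ i, t ∩ A i) := by
      rw [measure_iUnion hdisj2 (fun i => ht.inter (hAmeas i)), tsum_fintype]
    rw [h2, ← Set.inter_iUnion, hAunion, Set.inter_univ]
  have hsnd : ψ.map Prod.snd = ∑ i, q i • Measure.dirac (s i) := by
    ext t ht
    rw [Measure.map_apply measurable_snd ht, hψ]
    rw [Measure.finset_sum_apply]
    have hterm : ∀ i, (∑ j, (c i j / p i) • ((μ.restrict (A i)).map (fun x => (x, s j))))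
        (Prod.snd ⁻¹' t) = ∑ j, (if s j ∈ t then c i j else 0) := by
      intro i
      rw [Measure.finset_sum_apply]
      refine Finset.sum_congr rfl fun j _ => ?_
      rw [Measure.smul_apply, smul_eq_mul, Measure.map_apply (hmeasemb j) (measurable_snd ht)]
      by_cases hsj : s j ∈ t
      · rw [show (fun x : S => (x, s j)) ⁻¹' (Prod.snd ⁻¹' t) = Set.univ from by
          ext x; simp [hsj]]
        rw [Measure.restrict_apply_univ, if_pos hsj]
        exact hcancel i j
      · rw [show (fun x : S => (x, s j)) ⁻¹' (Prod.snd ⁻¹' t) = ∅ from by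
          ext x; simp [hsj]]
        rw [if_neg hsj]
        simp
    rw [Finset.sum_congr rfl fun i _ => hterm i, Finset.sum_comm]
    rw [Measure.finset_sum_apply]
    refine Finset.sum_congr rfl fun j _ => ?_
    rw [Measure.smul_apply, smul_eq_mul, Measure.dirac_apply' (s j) ht]
    by_cases hsj : s j ∈ t
    · rw [Finset.sum_congr rfl fun i _ => if_pos hsj, hcolsum j]
      rw [Set.indicator_of_mem hsj]
      simp
    · rw [Finset.sum_congr rfl fun i _ => if_neg hsj]
      rw [Set.indicator_of_notMem hsj]
      simp
  have hprob : IsProbabilityMeasure ψ := by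
    constructor
    have h1 : ψ Set.univ = (ψ.map Prod.fst) Set.univ := by
      rw [Measure.map_apply measurable_fst MeasurableSet.univ, Set.preimage_univ]
    rw [h1, hfst]
    exact measure_univ
  -- cost estimate
  set e1 : ENNReal := ENNReal.ofReal (1 / (n : ℝ)) with he1
  set eD : ENNReal := ENNReal.ofReal D with heD
  have hdistmeas : Measurable (fun x : S × S => ENNReal.ofReal (dist x.1 x.2)) :=
    continuous_dist.measurable.ennreal_ofReal
  have hBdd : Bornology.IsBounded (Set.univ : Set S) := isCompact_univ.isBounded
  have hsetint : ∀ i j, ∫⁻ x, ENNReal.ofReal (dist x (s j)) ∂(μ.restrict (A i))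
      ≤ (e1 + ENNReal.ofReal (dist (s i) (s j))) * p i := by
    intro i j
    calc ∫⁻ x, ENNReal.ofReal (dist x (s j)) ∂(μ.restrict (A i))
        ≤ ∫⁻ _, (e1 + ENNReal.ofReal (dist (s i) (s j))) ∂(μ.restrict (A i)) := by
          apply lintegral_mono_ae
          rw [ae_restrict_iff' (hAmeas i)]
          apply ae_of_all
          intro x hx
          have h1 : dist x (s j) ≤ 1 / n + dist (s i) (s j) := by
            calc dist x (s j) ≤ dist x (s i) + dist (s i) (s j) := dist_triangle _ _ _
              _ ≤ 1 / n + dist (s i) (s j) := by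
                  have : dist x (s i) = dist x (Q x) := by rw [hAQ i x hx]
                  rw [this]
                  exact add_le_add_left (hQnear x) _
          calc ENNReal.ofReal (dist x (s j)) ≤ ENNReal.ofReal (1 / n + dist (s i) (s j)) :=
                ENNReal.ofReal_le_ofReal h1
            _ = e1 + ENNReal.ofReal (dist (s i) (s j)) := by
                rw [he1, ENNReal.ofReal_add (by positivity) dist_nonneg]
      _ = (e1 + ENNReal.ofReal (dist (s i) (s j))) * p i := by
          rw [lintegral_const, Measure.restrict_apply_univ]
  have hlint : ∫⁻ x, ENNReal.ofReal (dist x.1 x.2) ∂ψ ≤ e1 + eD * T := by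
    rw [hψ, lintegral_finset_sum_measure]
    have hterm : ∀ i, ∫⁻ x, ENNReal.ofReal (dist x.1 x.2)
          ∂(∑ j, (c i j / p i) • ((μ.restrict (A i)).map (fun x => (x, s j))))
        ≤ ∑ j, (e1 + ENNReal.ofReal (dist (s i) (s j))) * c i j := by
      intro i
      rw [lintegral_finset_sum_measure]
      refine Finset.sum_le_sum fun j _ => ?_
      rw [lintegral_smul_measure, lintegral_map hdistmeas (hmeasemb j)]
      calc c i j / p i * ∫⁻ x, ENNReal.ofReal (dist x (s j)) ∂(μ.restrict (A i))
          ≤ c i j / p i * ((e1 + ENNReal.ofReal (dist (s i) (s j))) * p i) :=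
            mul_le_mul_right (hsetint i j) _
        _ = (e1 + ENNReal.ofReal (dist (s i) (s j))) * (c i j / p i * p i) := by ring
        _ = (e1 + ENNReal.ofReal (dist (s i) (s j))) * c i j := by rw [hcancel i j]
    calc ∑ i, ∫⁻ x, ENNReal.ofReal (dist x.1 x.2)
          ∂(∑ j, (c i j / p i) • ((μ.restrict (A i)).map (fun x => (x, s j))))
        ≤ ∑ i, ∑ j, (e1 + ENNReal.ofReal (dist (s i) (s j))) * c i j :=
          Finset.sum_le_sum fun i _ => hterm i
      _ = ∑ i, ∑ j, (e1 * c i j + ENNReal.ofReal (dist (s i) (s j)) * c i j) := by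
          refine Finset.sum_congr rfl fun i _ => Finset.sum_congr rfl fun j _ => ?_
          ring
      _ = e1 * (∑ i, ∑ j, c i j) + ∑ i, ∑ j, ENNReal.ofReal (dist (s i) (s j)) * c i j := by
          rw [Finset.mul_sum]
          rw [← Finset.sum_add_distrib]
          refine Finset.sum_congr rfl fun i _ => ?_
          rw [Finset.sum_add_distrib, Finset.mul_sum]
      _ ≤ e1 * 1 + eD * T := by
          refine add_le_add (by rw [htotc]) ?_
          calc ∑ i, ∑ j, ENNReal.ofReal (dist (s i) (s j)) * c i j
              ≤ ∑ i, ∑ j, eD * ((p i - q i) * (q j - p j) / T) := by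
                refine Finset.sum_le_sum fun i _ => Finset.sum_le_sum fun j _ => ?_
                simp only [hc]
                by_cases hij : i = j
                · subst hij
                  rw [dist_self, ENNReal.ofReal_zero, zero_mul]
                  exact zero_le
                · rw [if_neg hij, zero_add]
                  exact mul_le_mul_left (by
                    rw [heD]
                    exact ENNReal.ofReal_le_ofReal
                      (Metric.dist_le_diam_of_mem hBdd (Set.mem_univ _) (Set.mem_univ _))) _
            _ = eD * (∑ i, ∑ j, (p i - q i) * (q j - p j) / T) := by
                rw [Finset.mul_sum]
                exact Finset.sum_congr rfl fun i _ => by rw [Finset.mul_sum]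
            _ ≤ eD * T := mul_le_mul_right hcrossT _
      _ = e1 + eD * T := by rw [mul_one]
  -- T.toReal bound
  set Breal : ℝ := ((m / 2 : ℕ) : ℝ) * ((m : ℝ) - ((m / 2 : ℕ) : ℝ)) / m / M with hB
  have hsubfin : ∀ i, p i - q i ≠ ⊤ :=
    fun i => (tsub_le_self.trans_lt (lt_top_iff_ne_top.2 (hpfin i))).ne
  have hTtoReal : T.toReal ≤ Breal := by
    rw [hT, ENNReal.toReal_sum (fun i _ => hsubfin i)]
    have heq : ∀ i, (p i - q i).toReal = max (P i - (k i : ℝ) / M) 0 := by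
      intro i
      rcases le_total (p i) (q i) with h | h
      · rw [tsub_eq_zero_of_le h, ENNReal.toReal_zero]
        have h2 := ENNReal.toReal_mono (hqfin i) h
        rw [hqtoReal i] at h2
        rw [max_eq_right]
        linarith
      · rw [ENNReal.toReal_sub_of_le h (hpfin i), hqtoReal i]
        have h2 := ENNReal.toReal_mono (hpfin i) h
        rw [hqtoReal i] at h2
        rw [max_eq_left]
        linarith
    rw [Finset.sum_congr rfl fun i _ => heq i]
    exact hkerr
  have hintRepr : ∫ x, dist x.1 x.2 ∂ψ
      = (∫⁻ x, ENNReal.ofReal (dist x.1 x.2) ∂ψ).toReal :=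
    integral_eq_lintegral_of_nonneg_ae (ae_of_all _ fun x => dist_nonneg)
      continuous_dist.aestronglyMeasurable
  have hRHSfin2 : eD * T ≠ ⊤ := ENNReal.mul_ne_top ENNReal.ofReal_ne_top hTfin
  have hRHSfin : e1 + eD * T ≠ ⊤ :=
    ENNReal.add_ne_top.2 ⟨ENNReal.ofReal_ne_top, hRHSfin2⟩
  have hcost : ∫ x, dist x.1 x.2 ∂ψ ≤ 1 / n + D * T.toReal := by
    rw [hintRepr]
    calc (∫⁻ x, ENNReal.ofReal (dist x.1 x.2) ∂ψ).toReal
        ≤ (e1 + eD * T).toReal := ENNReal.toReal_mono hRHSfin hlint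
      _ = 1 / n + D * T.toReal := by
          rw [ENNReal.toReal_add ENNReal.ofReal_ne_top hRHSfin2, ENNReal.toReal_mul,
            ENNReal.toReal_ofReal (by positivity : (0:ℝ) ≤ 1 / (n:ℝ)), heD,
            ENNReal.toReal_ofReal hD0]
  have hW1 : W1 μ (∑ i, ((k i : ENNReal) / (M : ENNReal)) • Measure.dirac (s i))
      ≤ ∫ x, dist x.1 x.2 ∂ψ := by
    apply csInf_le
    · refine ⟨0, fun r hr => ?_⟩
      obtain ⟨ψ', _, _, _, rfl⟩ := hr
      exact integral_nonneg fun x => dist_nonneg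
    · refine ⟨ψ, hprob, hfst, ?_, rfl⟩
      rw [hsnd, hq]
  refine le_trans (csInf_le ?_ ⟨k, hk, rfl⟩) ?_
  · refine ⟨0, fun r hr => ?_⟩
    obtain ⟨k', hk', rfl⟩ := hr
    apply Real.sInf_nonneg
    rintro x ⟨ψ', _, _, _, rfl⟩
    exact integral_nonneg fun y => dist_nonneg
  · refine le_trans hW1 (le_trans hcost ?_)
    have h1 : D * T.toReal ≤ D * Breal := mul_le_mul_of_nonneg_left hTtoReal hD0
    have h2 : D * Breal = D / M * (((m / 2 : ℕ) : ℝ) * ((m : ℝ) - ((m / 2 : ℕ) : ℝ)) / m) := by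
      rw [hB]; ring
    linarith
end
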